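/- arXiv:2512.05926 — 10 statements merged into one kernel-verified Lean document; each statement's English description precedes it below -/
import Mathlib

section
/- Let U_{n,k} be the set of nonnegative n×k matrices F with all row sums equal to 1/n and all column sums equal to 1/k (where k divides n). Then the extreme points of the convex polytope U_{n,k} are exactly the matrices F with entries in {0, 1/n} such that each row has exactly one nonzero entry and each column has exactly n/k nonzero entries. -/
open Finset Function

section Cycle

variable {n k : ℕ}

/-- An alternating path in the bipartite "support" graph. -/
def MyPath (E : Set (Fin n × Fin k)) (t : ℕ) (r : ℕ → Fin n) (c : ℕ → Fin k) : Prop :=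
  (∀ u < t, ∀ v < t, r u = r v → u = v) ∧
  (∀ u ≤ t, ∀ v ≤ t, c u = c v → u = v) ∧
  (∀ u < t, (r u, c u) ∈ E ∧ (r u, c (u+1)) ∈ E) ∧
  (∃ a, (a, c t) ∈ E)

/-- A cycle in the bipartite support graph. -/
def HasCycle (E : Set (Fin n × Fin k)) : Prop :=
  ∃ (m : ℕ) (σ : Fin (m+2) → Fin n) (τ : Fin (m+2) → Fin k),
    Injective σ ∧ Injective τ ∧ ∀ u, (σ u, τ u) ∈ E ∧ (σ u, τ (u+1)) ∈ E

lemma fin_val_add_one {m : ℕ} (u : Fin (m+2)) :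
    ((u + 1 : Fin (m+2))).val = if u.val = m+1 then 0 else u.val + 1 := by
  rw [Fin.val_add_one]
  simp [Fin.ext_iff, Fin.last]

lemma mypath_le {E : Set (Fin n × Fin k)} {t r c} (h : MyPath E t r c) : t ≤ n := by
  classical
  have h1 : ((Finset.range t).image r).card = t := by
    rw [Finset.card_image_of_injOn, Finset.card_range]
    intro u hu v hv huv
    exact h.1 u (Finset.mem_range.1 hu) v (Finset.mem_range.1 hv) huv
  have h2 := Finset.card_le_univ ((Finset.range t).image r)
  simpa [h1] using h2

lemma mypath_extend {E : Set (Fin n × Fin k)}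
    (hrow : ∀ p ∈ E, ∃ j', j' ≠ p.2 ∧ (p.1, j') ∈ E)
    (hcol : ∀ p ∈ E, ∃ i', i' ≠ p.1 ∧ (i', p.2) ∈ E)
    (hnc : ¬ HasCycle E) {t r c} (h : MyPath E t r c) :
    ∃ r' c', MyPath E (t+1) r' c' := by
  classical
  obtain ⟨hrinj, hcinj, hedge, a0, ha0⟩ := h
  by_cases hA : ∃ a, (a, c t) ∈ E ∧ ∀ v < t, a ≠ r v
  · obtain ⟨a, haE, hafresh⟩ := hA
    obtain ⟨j', hj'ne, hj'E⟩ := hrow (a, c t) haE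
    simp only at hj'ne hj'E
    by_cases hA2 : ∃ s ≤ t, j' = c s
    · exfalso; apply hnc
      obtain ⟨s, hst, hjs⟩ := hA2
      have hslt : s < t := lt_of_le_of_ne hst (fun hs => hj'ne (by rw [hjs, hs]))
      refine ⟨t - s - 1, fun u => if u.val = t - s then a else r (s + u.val),
        fun u => c (s + u.val), ?_, ?_, ?_⟩
      · -- injective σ
        intro u v huv
        beta_reduce at huv
        have hu2 := u.isLt; have hv2 := v.isLt
        by_cases hu : u.val = t - s <;> by_cases hv : v.val = t - s
        · exact Fin.ext (by omega)
        · rw [if_pos hu, if_neg hv] at huv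
          exact absurd huv (hafresh (s + v.val) (by omega))
        · rw [if_neg hu, if_pos hv] at huv
          exact absurd huv.symm (hafresh (s + u.val) (by omega))
        · rw [if_neg hu, if_neg hv] at huv
          have := hrinj (s + u.val) (by omega) (s + v.val) (by omega) huv
          exact Fin.ext (by omega)
      · -- injective τ
        intro u v huv
        beta_reduce at huv
        have hu2 := u.isLt; have hv2 := v.isLt
        have := hcinj (s + u.val) (by omega) (s + v.val) (by omega) huv
        exact Fin.ext (by omega)
      · intro u
        have hu2 := u.isLt
        constructor
        · beta_reduce
          by_cases hu : u.val = t - s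
          · rw [if_pos hu]
            have h3 : s + u.val = t := by omega
            rw [h3]; exact haE
          · rw [if_neg hu]
            exact (hedge (s + u.val) (by omega)).1
        · beta_reduce
          rw [fin_val_add_one]
          by_cases hu : u.val = t - s
          · rw [if_pos hu, if_pos (by omega : u.val = (t - s - 1) + 1)]
            simp only [Nat.add_zero]
            rw [← hjs]; exact hj'E
          · rw [if_neg hu, if_neg (by omega : ¬ u.val = (t - s - 1) + 1)]
            have h1 : s + (u.val + 1) = (s + u.val) + 1 := by omega
            rw [h1]
            exact (hedge (s + u.val) (by omega)).2
    · push_neg at hA2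
      refine ⟨fun u => if u = t then a else r u, fun u => if u = t+1 then j' else c u,
        ?_, ?_, ?_, ?_⟩
      · intro u hu v hv huv
        beta_reduce at huv
        by_cases h1 : u = t <;> by_cases h2 : v = t
        · omega
        · rw [if_pos h1, if_neg h2] at huv
          exact absurd huv (hafresh v (by omega))
        · rw [if_neg h1, if_pos h2] at huv
          exact absurd huv.symm (hafresh u (by omega))
        · rw [if_neg h1, if_neg h2] at huv
          exact hrinj u (by omega) v (by omega) huv
      · intro u hu v hv huv
        beta_reduce at huv
        by_cases h1 : u = t+1 <;> by_cases h2 : v = t+1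
        · omega
        · rw [if_pos h1, if_neg h2] at huv
          exact absurd huv (hA2 v (by omega))
        · rw [if_neg h1, if_pos h2] at huv
          exact absurd huv.symm (hA2 u (by omega))
        · rw [if_neg h1, if_neg h2] at huv
          exact hcinj u (by omega) v (by omega) huv
      · intro u hu
        constructor
        · beta_reduce
          by_cases h1 : u = t
          · rw [if_pos h1, if_neg (by omega : ¬ u = t + 1), h1]
            exact haE
          · rw [if_neg h1, if_neg (by omega : ¬ u = t + 1)]
            exact (hedge u (by omega)).1
        · beta_reduce
          by_cases h1 : u = t
          · rw [if_pos h1, if_pos (by omega : u + 1 = t + 1)]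
            exact hj'E
          · rw [if_neg h1, if_neg (by omega : ¬ u + 1 = t + 1)]
            exact (hedge u (by omega)).2
      · refine ⟨a, ?_⟩
        beta_reduce
        rw [if_pos rfl]
        exact hj'E
  · push_neg at hA
    obtain ⟨v0, hv0t, hv0⟩ := hA a0 ha0
    obtain ⟨a1, ha1ne, ha1E⟩ := hcol (a0, c t) ha0
    simp only at ha1ne ha1E
    obtain ⟨v1, hv1t, hv1⟩ := hA a1 ha1E
    have hv01 : v0 ≠ v1 := by
      intro hh
      apply ha1ne
      rw [hv1, hv0, hh]
    obtain ⟨v, hvt, havE⟩ : ∃ v, v < t - 1 ∧ (r v, c t) ∈ E := by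
      by_cases h1 : v0 = t - 1
      · exact ⟨v1, by omega, by rw [← hv1]; exact ha1E⟩
      · exact ⟨v0, by omega, by rw [← hv0]; exact ha0⟩
    exfalso; apply hnc
    refine ⟨t - v - 2, fun u => r (v + u.val),
      fun u => if u.val = 0 then c t else c (v + u.val), ?_, ?_, ?_⟩
    · intro u u' huv
      beta_reduce at huv
      have hu2 := u.isLt; have hv2 := u'.isLt
      have := hrinj (v + u.val) (by omega) (v + u'.val) (by omega) huv
      exact Fin.ext (by omega)
    · intro u u' huv
      beta_reduce at huv
      have hu2 := u.isLt; have hv2 := u'.isLt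
      by_cases h1 : u.val = 0 <;> by_cases h2 : u'.val = 0
      · exact Fin.ext (by omega)
      · rw [if_pos h1, if_neg h2] at huv
        have := hcinj t le_rfl (v + u'.val) (by omega) huv
        omega
      · rw [if_neg h1, if_pos h2] at huv
        have := hcinj (v + u.val) (by omega) t le_rfl huv
        omega
      · rw [if_neg h1, if_neg h2] at huv
        have := hcinj (v + u.val) (by omega) (v + u'.val) (by omega) huv
        exact Fin.ext (by omega)
    · intro u
      have hu2 := u.isLt
      constructor
      · beta_reduce
        by_cases h1 : u.val = 0
        · rw [if_pos h1, h1]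
          simpa using havE
        · rw [if_neg h1]
          exact (hedge (v + u.val) (by omega)).1
      · beta_reduce
        rw [fin_val_add_one]
        by_cases h1 : u.val = (t - v - 2) + 1
        · rw [if_pos h1, if_pos rfl, h1]
          have h3 : v + ((t - v - 2) + 1) = t - 1 := by omega
          rw [h3]
          have h5 := (hedge (t-1) (by omega)).2
          have h4 : t - 1 + 1 = t := by omega
          rwa [h4] at h5
        · rw [if_neg h1, if_neg (by omega : ¬ u.val + 1 = 0)]
          have h3 : v + (u.val + 1) = (v + u.val) + 1 := by omega
          rw [h3]
          exact (hedge (v + u.val) (by omega)).2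

lemma exists_cycle (E : Set (Fin n × Fin k)) (hne : E.Nonempty)
    (hrow : ∀ p ∈ E, ∃ j', j' ≠ p.2 ∧ (p.1, j') ∈ E)
    (hcol : ∀ p ∈ E, ∃ i', i' ≠ p.1 ∧ (i', p.2) ∈ E) : HasCycle E := by
  classical
  by_contra hnc
  obtain ⟨⟨i0, j0⟩, h0⟩ := hne
  have hP0 : ∃ r c, MyPath E 0 r c := by
    refine ⟨fun _ => i0, fun _ => j0, ?_, ?_, ?_, ⟨i0, h0⟩⟩
    · intro u hu; omega
    · intro u hu v hv _; omega
    · intro u hu; omega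
  have hall : ∀ t, ∃ r c, MyPath E t r c := by
    intro t
    induction t with
    | zero => exact hP0
    | succ t ih =>
      obtain ⟨r, c, h⟩ := ih
      exact mypath_extend hrow hcol hnc h
  obtain ⟨r, c, h⟩ := hall (n+1)
  have := mypath_le h
  omega

end Cycle

section Ext
variable {n k : ℕ}

lemma cycle_not_extreme {U : Set (Matrix (Fin n) (Fin k) ℝ)}
    (hU : U = {G : Matrix (Fin n) (Fin k) ℝ | (∀ i j, 0 ≤ G i j) ∧
      (∀ j, ∑ i, G i j = 1/(k:ℝ)) ∧ (∀ i, ∑ j, G i j = 1/(n:ℝ))})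
    {F : Matrix (Fin n) (Fin k) ℝ} (hF : F ∈ U)
    {m : ℕ} {σ : Fin (m+2) → Fin n} {τ : Fin (m+2) → Fin k}
    (hσ : Injective σ) (hτ : Injective τ)
    (hedge : ∀ u, (0 < F (σ u) (τ u)) ∧ (0 < F (σ u) (τ (u+1)))) :
    F ∉ Set.extremePoints ℝ U := by
  classical
  set Z : Matrix (Fin n) (Fin k) ℝ := Matrix.of fun i j =>
    ∑ u : Fin (m+2), ((if σ u = i ∧ τ u = j then (1:ℝ) else 0)
      - (if σ u = i ∧ τ (u+1) = j then (1:ℝ) else 0)) with hZdef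
  have hZ : ∀ i j, Z i j = ∑ u : Fin (m+2), ((if σ u = i ∧ τ u = j then (1:ℝ) else 0)
      - (if σ u = i ∧ τ (u+1) = j then (1:ℝ) else 0)) := fun i j => rfl
  have hone : (1 : Fin (m+2)) ≠ 0 := by
    simp [Fin.ext_iff]
  have hAB : ∀ i j, (∃ u, σ u = i ∧ τ u = j) → (∃ u, σ u = i ∧ τ (u+1) = j) → False := by
    rintro i j ⟨u, hu1, hu2⟩ ⟨v, hv1, hv2⟩
    have huv : u = v := hσ (hu1.trans hv1.symm)
    subst huv
    have h2 : τ u = τ (u+1) := hu2.trans hv2.symm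
    have h3 := hτ h2
    have : (1 : Fin (m+2)) = 0 := by
      have := left_eq_add.mp h3
      exact this
    exact hone this
  have hA : ∀ i j, (∑ u : Fin (m+2), (if σ u = i ∧ τ u = j then (1:ℝ) else 0))
      = if ∃ u, σ u = i ∧ τ u = j then 1 else 0 := by
    intro i j
    split
    case isTrue h =>
      obtain ⟨u0, hu0⟩ := h
      have hiff : ∀ u : Fin (m+2), (σ u = i ∧ τ u = j) ↔ u = u0 := by
        intro u
        constructor
        · rintro ⟨h1, -⟩; exact hσ (h1.trans hu0.1.symm)
        · rintro rfl; exact hu0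
      calc ∑ u : Fin (m+2), (if σ u = i ∧ τ u = j then (1:ℝ) else 0)
          = ∑ u : Fin (m+2), (if u = u0 then (1:ℝ) else 0) := by
            refine Finset.sum_congr rfl fun u _ => ?_
            simp [hiff u]
        _ = 1 := by simp
    case isFalse h =>
      apply Finset.sum_eq_zero
      intro u _
      rw [if_neg]
      exact fun hc => h ⟨u, hc⟩
  have hB : ∀ i j, (∑ u : Fin (m+2), (if σ u = i ∧ τ (u+1) = j then (1:ℝ) else 0))
      = if ∃ u, σ u = i ∧ τ (u+1) = j then 1 else 0 := by
    intro i j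
    split
    case isTrue h =>
      obtain ⟨u0, hu0⟩ := h
      have hiff : ∀ u : Fin (m+2), (σ u = i ∧ τ (u+1) = j) ↔ u = u0 := by
        intro u
        constructor
        · rintro ⟨h1, -⟩; exact hσ (h1.trans hu0.1.symm)
        · rintro rfl; exact hu0
      calc ∑ u : Fin (m+2), (if σ u = i ∧ τ (u+1) = j then (1:ℝ) else 0)
          = ∑ u : Fin (m+2), (if u = u0 then (1:ℝ) else 0) := by
            refine Finset.sum_congr rfl fun u _ => ?_
            simp [hiff u]
        _ = 1 := by simp
    case isFalse h =>
      apply Finset.sum_eq_zero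
      intro u _
      rw [if_neg]
      exact fun hc => h ⟨u, hc⟩
  have hZval : ∀ i j, Z i j = (if ∃ u, σ u = i ∧ τ u = j then (1:ℝ) else 0)
      - (if ∃ u, σ u = i ∧ τ (u+1) = j then (1:ℝ) else 0) := by
    intro i j
    rw [hZ, Finset.sum_sub_distrib, hA, hB]
  -- epsilon
  set ε : ℝ := Finset.univ.inf' Finset.univ_nonempty
    (fun u : Fin (m+2) => min (F (σ u) (τ u)) (F (σ u) (τ (u+1)))) with hεdef
  have hε : 0 < ε := by
    rw [hεdef, Finset.lt_inf'_iff]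
    intro u _
    exact lt_min (hedge u).1 (hedge u).2
  have hε1 : ∀ u, ε ≤ F (σ u) (τ u) := fun u =>
    le_trans (Finset.inf'_le _ (Finset.mem_univ u)) (min_le_left _ _)
  have hε2 : ∀ u, ε ≤ F (σ u) (τ (u+1))  := fun u =>
    le_trans (Finset.inf'_le _ (Finset.mem_univ u)) (min_le_right _ _)
  -- case analysis on Z values
  have hZcases : ∀ i j, Z i j = 0 ∨ (Z i j = 1 ∧ ε ≤ F i j) ∨ (Z i j = -1 ∧ ε ≤ F i j) := by
    intro i j
    by_cases h1 : ∃ u, σ u = i ∧ τ u = j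
    · right; left
      constructor
      · rw [hZval, if_pos h1, if_neg (fun h2 => hAB i j h1 h2)]; ring
      · obtain ⟨u, hu1, hu2⟩ := h1
        rw [← hu1, ← hu2]; exact hε1 u
    · by_cases h2 : ∃ u, σ u = i ∧ τ (u+1) = j
      · right; right
        constructor
        · rw [hZval, if_neg h1, if_pos h2]; ring
        · obtain ⟨u, hu1, hu2⟩ := h2
          rw [← hu1, ← hu2]; exact hε2 u
      · left; rw [hZval, if_neg h1, if_neg h2]; ring
  -- row and column sums of Z vanish
  have hZrow : ∀ i, ∑ j, Z i j = 0 := by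
    intro i
    have h1 : ∀ u : Fin (m+2),
        ∑ j, ((if σ u = i ∧ τ u = j then (1:ℝ) else 0)
          - (if σ u = i ∧ τ (u+1) = j then (1:ℝ) else 0)) = 0 := by
      intro u
      rw [Finset.sum_sub_distrib]
      by_cases h : σ u = i <;> simp [h, Finset.sum_ite_eq]
    calc ∑ j, Z i j = ∑ j, ∑ u : Fin (m+2), ((if σ u = i ∧ τ u = j then (1:ℝ) else 0)
          - (if σ u = i ∧ τ (u+1) = j then (1:ℝ) else 0)) := rfl
      _ = ∑ u : Fin (m+2), ∑ j, ((if σ u = i ∧ τ u = j then (1:ℝ) else 0)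
          - (if σ u = i ∧ τ (u+1) = j then (1:ℝ) else 0)) := Finset.sum_comm
      _ = 0 := by rw [Finset.sum_congr rfl fun u _ => h1 u]; simp
  have hZcol : ∀ j, ∑ i, Z i j = 0 := by
    intro j
    have h1 : ∀ u : Fin (m+2),
        ∑ i, ((if σ u = i ∧ τ u = j then (1:ℝ) else 0)
          - (if σ u = i ∧ τ (u+1) = j then (1:ℝ) else 0))
          = (if τ u = j then (1:ℝ) else 0) - (if τ (u+1) = j then (1:ℝ) else 0) := by
      intro u
      rw [Finset.sum_sub_distrib]
      congr 1
      · by_cases h : τ u = j <;> simp [h, Finset.sum_ite_eq]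
      · by_cases h : τ (u+1) = j <;> simp [h, Finset.sum_ite_eq]
    have h2 : ∑ u : Fin (m+2), (if τ (u+1) = j then (1:ℝ) else 0)
        = ∑ u : Fin (m+2), (if τ u = j then (1:ℝ) else 0) :=
      Fintype.sum_equiv (Equiv.addRight (1 : Fin (m+2)))
        (fun u => if τ (u+1) = j then (1:ℝ) else 0)
        (fun u => if τ u = j then (1:ℝ) else 0) (fun u => rfl)
    calc ∑ i, Z i j = ∑ i, ∑ u : Fin (m+2), ((if σ u = i ∧ τ u = j then (1:ℝ) else 0)
          - (if σ u = i ∧ τ (u+1) = j then (1:ℝ) else 0)) := rfl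
      _ = ∑ u : Fin (m+2), ∑ i, ((if σ u = i ∧ τ u = j then (1:ℝ) else 0)
          - (if σ u = i ∧ τ (u+1) = j then (1:ℝ) else 0)) := Finset.sum_comm
      _ = ∑ u : Fin (m+2), ((if τ u = j then (1:ℝ) else 0) - (if τ (u+1) = j then (1:ℝ) else 0)) :=
          Finset.sum_congr rfl fun u _ => h1 u
      _ = 0 := by rw [Finset.sum_sub_distrib, h2]; ring
  -- the two perturbed matrices
  rw [hU] at hF
  obtain ⟨hFpos, hFcol, hFrow⟩ := hF
  set x : Matrix (Fin n) (Fin k) ℝ := Matrix.of fun i j => F i j + ε * Z i j with hxdef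
  set y : Matrix (Fin n) (Fin k) ℝ := Matrix.of fun i j => F i j - ε * Z i j with hydef
  have hxa : ∀ i j, x i j = F i j + ε * Z i j := fun i j => rfl
  have hya : ∀ i j, y i j = F i j - ε * Z i j := fun i j => rfl
  have hxU : x ∈ U := by
    rw [hU]
    refine ⟨fun i j => ?_, fun j => ?_, fun i => ?_⟩
    · rw [hxa]
      rcases hZcases i j with h | ⟨h, hle⟩ | ⟨h, hle⟩
      · rw [h]; simpa using hFpos i j
      · rw [h]; have := hFpos i j; nlinarith
      · rw [h]; nlinarith
    · have : ∑ i, x i j = (∑ i, F i j) + ε * ∑ i, Z i j := by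
        rw [Finset.sum_congr rfl fun i _ => hxa i j, Finset.sum_add_distrib, Finset.mul_sum]
      rw [this, hZcol j, hFcol j]; ring
    · have : ∑ j, x i j = (∑ j, F i j) + ε * ∑ j, Z i j := by
        rw [Finset.sum_congr rfl fun j _ => hxa i j, Finset.sum_add_distrib, Finset.mul_sum]
      rw [this, hZrow i, hFrow i]; ring
  have hyU : y ∈ U := by
    rw [hU]
    refine ⟨fun i j => ?_, fun j => ?_, fun i => ?_⟩
    · rw [hya]
      rcases hZcases i j with h | ⟨h, hle⟩ | ⟨h, hle⟩
      · rw [h]; simpa using hFpos i j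
      · rw [h]; nlinarith
      · rw [h]; have := hFpos i j; nlinarith
    · have : ∑ i, y i j = (∑ i, F i j) - ε * ∑ i, Z i j := by
        rw [Finset.sum_congr rfl fun i _ => hya i j, Finset.sum_sub_distrib, Finset.mul_sum]
      rw [this, hZcol j, hFcol j]; ring
    · have : ∑ j, y i j = (∑ j, F i j) - ε * ∑ j, Z i j := by
        rw [Finset.sum_congr rfl fun j _ => hya i j, Finset.sum_sub_distrib, Finset.mul_sum]
      rw [this, hZrow i, hFrow i]; ring
  intro hext
  rw [mem_extremePoints] at hext
  have hseg : F ∈ openSegment ℝ x y := by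
    refine ⟨(1:ℝ)/2, (1:ℝ)/2, by norm_num, by norm_num, by norm_num, ?_⟩
    funext i j
    have h : ((((1:ℝ)/2) • x + ((1:ℝ)/2) • y)) i j = (1/2 : ℝ) * x i j + (1/2 : ℝ) * y i j := rfl
    rw [h, hxa, hya]
    ring
  have hxF := (hext.2 x hxU y hyU hseg).1
  have hZ00 : Z (σ 0) (τ 0) = 1 := by
    have h1 : ∃ u, σ u = σ 0 ∧ τ u = τ 0 := ⟨0, rfl, rfl⟩
    rw [hZval, if_pos h1, if_neg (fun h2 => hAB _ _ h1 h2)]; ring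
  have : x (σ 0) (τ 0) = F (σ 0) (τ 0) := by rw [hxF]
  rw [hxa, hZ00] at this
  nlinarith
end Ext


theorem stmt0 (n k : ℕ) (hn : 0 < n) (hk : 0 < k) (hdvd : k ∣ n)
    (U : Set (Matrix (Fin n) (Fin k) ℝ))
    (hU : U = {F | (∀ i j, 0 ≤ F i j) ∧ (∀ j, ∑ i, F i j = 1 / (k : ℝ)) ∧
      (∀ i, ∑ j, F i j = 1 / (n : ℝ))})
    (F : Matrix (Fin n) (Fin k) ℝ) :
    F ∈ Set.extremePoints ℝ U ↔
      ((∀ i j, F i j = 0 ∨ F i j = 1 / (n : ℝ)) ∧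
        (∀ i, ∃! j, F i j ≠ 0) ∧
        (∀ j, (Finset.univ.filter fun i => F i j ≠ 0).card = n / k)) := by
  classical
  have hnpos : (0:ℝ) < n := by exact_mod_cast hn
  have hkpos : (0:ℝ) < k := by exact_mod_cast hk
  have h1n : (0:ℝ) < 1/(n:ℝ) := by positivity
  obtain ⟨d, hd⟩ := hdvd
  have hdiv : n / k = d := by rw [hd]; exact Nat.mul_div_cancel_left d hk
  have hdpos : 0 < d := by
    rcases Nat.eq_zero_or_pos d with h | h
    · subst h; omega
    · exact h
  have hnd : (n:ℝ) = (k:ℝ) * (d:ℝ) := by rw [hd]; push_cast; ring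
  have hdr : (1:ℝ)/(k:ℝ) = (d:ℝ) * (1/(n:ℝ)) := by
    rw [hnd]
    have hd' : (0:ℝ) < (d:ℝ) := by exact_mod_cast hdpos
    field_simp
  constructor
  · intro hF
    rw [mem_extremePoints] at hF
    have hFU := hF.1
    rw [hU] at hFU
    obtain ⟨hpos, hcolsum, hrowsum⟩ := hFU
    have hub : ∀ i j, F i j ≤ 1/(n:ℝ) := by
      intro i j
      have h1 := Finset.single_le_sum (f := fun j' => F i j') (fun j' _ => hpos i j')
        (Finset.mem_univ j)
      rwa [hrowsum i] at h1
    have key : ∀ i j, F i j = 0 ∨ F i j = 1/(n:ℝ) := by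
      by_contra hcon
      push_neg at hcon
      obtain ⟨i0, j0, h00, h01⟩ := hcon
      set Ef : Set (Fin n × Fin k) := {p | 0 < F p.1 p.2 ∧ F p.1 p.2 < 1/(n:ℝ)} with hEf
      have hmem0 : (i0, j0) ∈ Ef :=
        ⟨lt_of_le_of_ne (hpos i0 j0) (Ne.symm h00), lt_of_le_of_ne (hub i0 j0) h01⟩
      have hrowE : ∀ p ∈ Ef, ∃ j', j' ≠ p.2 ∧ (p.1, j') ∈ Ef := by
        rintro ⟨i, j⟩ ⟨hp0, hp1⟩
        simp only at hp0 hp1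
        have hsum : ∑ j' ∈ Finset.univ.erase j, F i j' = 1/(n:ℝ) - F i j := by
          have h2 := Finset.add_sum_erase Finset.univ (fun j' => F i j') (Finset.mem_univ j)
          rw [hrowsum i] at h2
          linarith
        have hpos' : (0:ℝ) < ∑ j' ∈ Finset.univ.erase j, F i j' := by rw [hsum]; linarith
        have hex : ∃ j' ∈ Finset.univ.erase j, 0 < F i j' := by
          by_contra hno
          push_neg at hno
          have := Finset.sum_nonpos hno
          linarith
        obtain ⟨j', hj'mem, hj'pos⟩ := hex
        refine ⟨j', Finset.ne_of_mem_erase hj'mem, hj'pos, ?_⟩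
        have h2 := Finset.single_le_sum (f := fun j'' => F i j'')
          (fun j'' _ => hpos i j'') hj'mem
        rw [hsum] at h2
        simp only
        linarith
      have hcolE : ∀ p ∈ Ef, ∃ i', i' ≠ p.1 ∧ (i', p.2) ∈ Ef := by
        rintro ⟨i, j⟩ ⟨hp0, hp1⟩
        simp only at hp0 hp1
        by_contra hno
        push_neg at hno
        simp only at hno
        set S := (Finset.univ.erase i).filter (fun i' => F i' j = 1/(n:ℝ)) with hS
        have h01' : ∀ i' ∈ Finset.univ.erase i, F i' j = 0 ∨ F i' j = 1/(n:ℝ) := by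
          intro i' hi'
          have hne := Finset.ne_of_mem_erase hi'
          by_contra hcon2
          push_neg at hcon2
          exact hno i' hne ⟨lt_of_le_of_ne (hpos i' j) (Ne.symm hcon2.1),
            lt_of_le_of_ne (hub i' j) hcon2.2⟩
        have hsum : ∑ i' ∈ Finset.univ.erase i, F i' j = S.card * (1/(n:ℝ)) := by
          rw [← Finset.sum_filter_add_sum_filter_not (Finset.univ.erase i)
            (fun i' => F i' j = 1/(n:ℝ)) (fun i' => F i' j)]
          have e1 : ∑ i' ∈ S, F i' j = S.card * (1/(n:ℝ)) := by
            rw [Finset.sum_congr rfl (fun i' hi' => (Finset.mem_filter.1 hi').2)]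
            rw [Finset.sum_const, nsmul_eq_mul]
          have e2 : ∑ i' ∈ (Finset.univ.erase i).filter
              (fun i' => ¬ F i' j = 1/(n:ℝ)), F i' j = 0 := by
            apply Finset.sum_eq_zero
            intro i' hi'
            obtain ⟨hmem', hne'⟩ := Finset.mem_filter.1 hi'
            rcases h01' i' hmem' with h | h
            · exact h
            · exact absurd h hne'
          rw [← hS, e1, e2, add_zero]
        have hcol' : F i j + S.card * (1/(n:ℝ)) = 1/(k:ℝ) := by
          have h3 := Finset.add_sum_erase Finset.univ (fun i' => F i' j) (Finset.mem_univ i)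
          rw [hsum, hcolsum j] at h3
          exact h3
        rw [hdr] at hcol'
        have hFij : F i j = ((d:ℝ) - S.card) * (1/(n:ℝ)) := by
          have h5 : F i j = (d:ℝ) * (1/(n:ℝ)) - S.card * (1/(n:ℝ)) := by linarith
          rw [h5]; ring
        have h6' : ((d:ℝ) - S.card) * (1/(n:ℝ)) < 1 * (1/(n:ℝ)) := by
          rw [← hFij, one_mul]; exact hp1
        have h5' : (0:ℝ) * (1/(n:ℝ)) < ((d:ℝ) - S.card) * (1/(n:ℝ)) := by
          rw [zero_mul, ← hFij]; exact hp0
        have h6 : (d:ℝ) - S.card < 1 := lt_of_mul_lt_mul_right h6' h1n.le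
        have h5 : (0:ℝ) < (d:ℝ) - S.card := lt_of_mul_lt_mul_right h5' h1n.le
        have h7 : S.card < d := by exact_mod_cast (by linarith : (S.card:ℝ) < (d:ℝ))
        have h8 : d < S.card + 1 := by
          exact_mod_cast (by push_cast; linarith : (d:ℝ) < ((S.card:ℕ):ℝ) + 1)
        omega
      obtain ⟨m, σ, τ, hσ, hτ, hedges⟩ := exists_cycle Ef ⟨(i0,j0), hmem0⟩ hrowE hcolE
      refine cycle_not_extreme hU hF.1 hσ hτ (fun u => ⟨((hedges u).1).1, ((hedges u).2).1⟩) ?_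
      rw [mem_extremePoints]
      exact hF
    refine ⟨key, ?_, ?_⟩
    · intro i
      have hex : ∃ j, F i j ≠ 0 := by
        by_contra hno
        push_neg at hno
        have h2 : ∑ j, F i j = 0 := Finset.sum_eq_zero (fun j _ => hno j)
        rw [hrowsum i] at h2
        linarith
      obtain ⟨j1, hj1⟩ := hex
      refine ⟨j1, hj1, ?_⟩
      intro j' hj'
      by_contra hne
      have e1 : F i j1 = 1/(n:ℝ) := (key i j1).resolve_left (fun h => hj1 h)
      have e2 : F i j' = 1/(n:ℝ) := (key i j').resolve_left (fun h => hj' h)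
      have h3 := Finset.add_sum_erase Finset.univ (fun j => F i j) (Finset.mem_univ j1)
      rw [hrowsum i] at h3
      have h4 : F i j' ≤ ∑ j ∈ Finset.univ.erase j1, F i j :=
        Finset.single_le_sum (f := fun j => F i j) (fun j _ => hpos i j)
          (Finset.mem_erase.2 ⟨hne, Finset.mem_univ j'⟩)
      linarith
    · intro j
      have hsum : ∑ i, F i j
          = ((Finset.univ.filter (fun i => F i j ≠ 0)).card : ℝ) * (1/(n:ℝ)) := by
        rw [← Finset.sum_filter_add_sum_filter_not Finset.univ
          (fun i => F i j ≠ 0) (fun i => F i j)]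
        have e1 : ∑ i ∈ Finset.univ.filter (fun i => F i j ≠ 0), F i j
            = ((Finset.univ.filter (fun i => F i j ≠ 0)).card : ℝ) * (1/(n:ℝ)) := by
          rw [Finset.sum_congr rfl
            (fun i hi => (key i j).resolve_left (Finset.mem_filter.1 hi).2)]
          rw [Finset.sum_const, nsmul_eq_mul]
        have e2 : ∑ i ∈ Finset.univ.filter (fun i => ¬ F i j ≠ 0), F i j = 0 := by
          apply Finset.sum_eq_zero
          intro i hi
          exact not_not.1 (Finset.mem_filter.1 hi).2
        rw [e1, e2, add_zero]
      rw [hcolsum j, hdr] at hsum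
      have hcards : ((Finset.univ.filter (fun i => F i j ≠ 0)).card : ℝ) = (d:ℝ) := by
        have := mul_right_cancel₀ (ne_of_gt h1n) hsum.symm
        linarith [this]
      have : (Finset.univ.filter (fun i => F i j ≠ 0)).card = d := by exact_mod_cast hcards
      rw [hdiv]
      exact this
  · rintro ⟨h01, huniq, hcount⟩
    have hFpos : ∀ i j, 0 ≤ F i j := by
      intro i j
      rcases h01 i j with h | h
      · rw [h]
      · rw [h]; positivity
    have hFrow : ∀ i, ∑ j, F i j = 1/(n:ℝ) := by
      intro i
      obtain ⟨j0, hj0, hname⟩ := huniq i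
      have hz : ∀ b, b ≠ j0 → F i b = 0 := by
        intro b hb
        by_contra hbne
        exact hb (hname b hbne)
      rw [Finset.sum_eq_single j0 (fun b _ hb => hz b hb)
        (fun h => absurd (Finset.mem_univ j0) h)]
      exact (h01 i j0).resolve_left hj0
    have hFcol : ∀ j, ∑ i, F i j = 1/(k:ℝ) := by
      intro j
      have hsum : ∑ i, F i j
          = ((Finset.univ.filter (fun i => F i j ≠ 0)).card : ℝ) * (1/(n:ℝ)) := by
        rw [← Finset.sum_filter_add_sum_filter_not Finset.univ
          (fun i => F i j ≠ 0) (fun i => F i j)]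
        have e1 : ∑ i ∈ Finset.univ.filter (fun i => F i j ≠ 0), F i j
            = ((Finset.univ.filter (fun i => F i j ≠ 0)).card : ℝ) * (1/(n:ℝ)) := by
          rw [Finset.sum_congr rfl
            (fun i hi => (h01 i j).resolve_left (Finset.mem_filter.1 hi).2)]
          rw [Finset.sum_const, nsmul_eq_mul]
        have e2 : ∑ i ∈ Finset.univ.filter (fun i => ¬ F i j ≠ 0), F i j = 0 := by
          apply Finset.sum_eq_zero
          intro i hi
          exact not_not.1 (Finset.mem_filter.1 hi).2
        rw [e1, e2, add_zero]
      rw [hsum, hcount j, hdiv, hdr]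
    have hFU : F ∈ U := by rw [hU]; exact ⟨hFpos, hFcol, hFrow⟩
    rw [mem_extremePoints]
    refine ⟨hFU, ?_⟩
    intro x hx y hy hseg
    obtain ⟨a, b, ha, hb, hab, hxy⟩ := hseg
    rw [hU] at hx hy
    obtain ⟨hxpos, hxcol, hxrow⟩ := hx
    obtain ⟨hypos, hycol, hyrow⟩ := hy
    have hcomb : ∀ i j, a * x i j + b * y i j = F i j := by
      intro i j
      have h2 := congrFun (congrFun hxy i) j
      have h3 : (a • x + b • y) i j = a * x i j + b * y i j := rfl
      rw [h3] at h2
      exact h2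
    have hx0 : ∀ i j, F i j = 0 → x i j = 0 ∧ y i j = 0 := by
      intro i j h0
      have hc := hcomb i j
      rw [h0] at hc
      constructor
      · nlinarith [hxpos i j, hypos i j]
      · nlinarith [hxpos i j, hypos i j]
    have heq : ∀ (G : Matrix (Fin n) (Fin k) ℝ), (∀ i, ∑ j, G i j = 1/(n:ℝ)) →
        (∀ i j, F i j = 0 → G i j = 0) → G = F := by
      intro G hGrow hG0
      funext i j
      obtain ⟨j0, hj0, hname⟩ := huniq i
      have hFz : ∀ b, b ≠ j0 → F i b = 0 := by
        intro b hb
        by_contra hbne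
        exact hb (hname b hbne)
      by_cases hjj : j = j0
      · subst hjj
        have h2 := Finset.add_sum_erase Finset.univ (fun b => G i b) (Finset.mem_univ j)
        rw [hGrow i] at h2
        have h3 : ∑ b ∈ Finset.univ.erase j, G i b = 0 := by
          apply Finset.sum_eq_zero
          intro b hb
          exact hG0 i b (hFz b (Finset.ne_of_mem_erase hb))
        rw [h3] at h2
        have h4 : F i j = 1/(n:ℝ) := (h01 i j).resolve_left hj0
        linarith
      · rw [hG0 i j (hFz j hjj), hFz j hjj]
    exact ⟨heq x hxrow (fun i j h0 => (hx0 i j h0).1),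
      heq y hyrow (fun i j h0 => (hx0 i j h0).2)⟩
end

section
/- Consider the BalLOT iteration: given data X ∈ ℝ^{d×n} and an initialization μ^0 ∈ ℝ^{d×k}, define for t ≥ 0: F^{t+1} ∈ argmin_{F ∈ U_{n,k}} f(F, μ^t), and μ^{t+1} = kXF^{t+1}. Then for every t, f(F^{t+1}, μ^t) ≥ f(F^{t+2}, μ^{t+1}) + (1/k)‖μ^{t+1} − μ^t‖_F². Consequently ∑_{t=0}^∞ ‖μ^{t+1} − μ^t‖_F² ≤ k·f(F^1, μ^0) < ∞, and in particular for every ε > 0 there exists t with ‖μ^{t+1} − μ^t‖_F < ε. -/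
open Finset

theorem stmt2 (n k d : ℕ) (hn : 0 < n) (hk : 0 < k)
    (x : Fin n → EuclideanSpace ℝ (Fin d))
    (U : Set (Matrix (Fin n) (Fin k) ℝ))
    (hU : U = {F | (∀ i j, 0 ≤ F i j) ∧ (∀ j, ∑ i, F i j = 1 / (k : ℝ)) ∧
      (∀ i, ∑ j, F i j = 1 / (n : ℝ))})
    (f : Matrix (Fin n) (Fin k) ℝ → (Fin k → EuclideanSpace ℝ (Fin d)) → ℝ)
    (hf : ∀ G ν, f G ν = ∑ i, ∑ j, G i j * ‖x i - ν j‖ ^ 2)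
    (F : ℕ → Matrix (Fin n) (Fin k) ℝ)
    (μ : ℕ → Fin k → EuclideanSpace ℝ (Fin d))
    (hFmem : ∀ t, F (t + 1) ∈ U)
    (hFopt : ∀ t, ∀ G ∈ U, f (F (t + 1)) (μ t) ≤ f G (μ t))
    (hμ : ∀ t j, μ (t + 1) j = (k : ℝ) • ∑ i, F (t + 1) i j • x i) :
    (∀ t, f (F (t + 2)) (μ (t + 1)) + (1 / (k : ℝ)) * ∑ j, ‖μ (t + 1) j - μ t j‖ ^ 2
        ≤ f (F (t + 1)) (μ t)) ∧
    Summable (fun t => ∑ j, ‖μ (t + 1) j - μ t j‖ ^ 2) ∧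
    ∑' t : ℕ, ∑ j, ‖μ (t + 1) j - μ t j‖ ^ 2 ≤ (k : ℝ) * f (F 1) (μ 0) ∧
    ∀ ε > (0 : ℝ), ∃ t, Real.sqrt (∑ j, ‖μ (t + 1) j - μ t j‖ ^ 2) < ε := by
  subst hU
  have hk' : (k : ℝ) ≠ 0 := Nat.cast_ne_zero.mpr hk.ne'
  have hkpos : (0 : ℝ) < k := Nat.cast_pos.mpr hk
  -- key identity
  have key : ∀ t ν, f (F (t+1)) ν
      = f (F (t+1)) (μ (t+1)) + (1/(k:ℝ)) * ∑ j, ‖μ (t+1) j - ν j‖^2 := by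
    intro t ν
    rw [hf, hf, Finset.sum_comm]
    conv_rhs => rw [Finset.sum_comm]
    rw [Finset.mul_sum, ← Finset.sum_add_distrib]
    refine Finset.sum_congr rfl fun j _ => ?_
    have hcol : ∑ i, F (t+1) i j = 1/(k:ℝ) := (hFmem t).2.1 j
    have hmean : ∑ i, (F (t+1) i j) • x i = (1/(k:ℝ)) • μ (t+1) j := by
      rw [hμ t j, smul_smul, one_div, inv_mul_cancel₀ hk', one_smul]
    have hzero : ∑ i, (F (t+1) i j) • (x i - μ (t+1) j) = 0 := by
      simp only [smul_sub, Finset.sum_sub_distrib, hmean, ← Finset.sum_smul, hcol, sub_self]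
    have expand : ∀ i, ‖x i - ν j‖^2
        = ‖x i - μ (t+1) j‖^2
          + 2 * (inner (𝕜 := ℝ) (x i - μ (t+1) j) (μ (t+1) j - ν j))
          + ‖μ (t+1) j - ν j‖^2 := by
      intro i
      have h : x i - ν j = (x i - μ (t+1) j) + (μ (t+1) j - ν j) := by abel
      rw [h, norm_add_sq_real]
    calc ∑ i, F (t+1) i j * ‖x i - ν j‖^2
        = ∑ i, (F (t+1) i j * ‖x i - μ (t+1) j‖^2
            + 2 * (inner (𝕜 := ℝ) ((F (t+1) i j) • (x i - μ (t+1) j)) (μ (t+1) j - ν j))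
            + F (t+1) i j * ‖μ (t+1) j - ν j‖^2) := by
          refine Finset.sum_congr rfl fun i _ => ?_
          rw [expand i, real_inner_smul_left]; ring
      _ = ∑ i, F (t+1) i j * ‖x i - μ (t+1) j‖^2
            + 2 * (inner (𝕜 := ℝ) (∑ i, (F (t+1) i j) • (x i - μ (t+1) j)) (μ (t+1) j - ν j))
            + (∑ i, F (t+1) i j) * ‖μ (t+1) j - ν j‖^2 := by
          rw [Finset.sum_add_distrib, Finset.sum_add_distrib, ← Finset.sum_mul,
            sum_inner, Finset.mul_sum]
      _ = ∑ i, F (t+1) i j * ‖x i - μ (t+1) j‖^2 + 1/(k:ℝ) * ‖μ (t+1) j - ν j‖^2 := by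
          rw [hzero, hcol, inner_zero_left]; ring
  -- decrease step
  have step : ∀ t, f (F (t + 2)) (μ (t + 1)) + (1 / (k : ℝ)) * ∑ j, ‖μ (t + 1) j - μ t j‖ ^ 2
      ≤ f (F (t + 1)) (μ t) := by
    intro t
    have h1 : f (F (t + 2)) (μ (t + 1)) ≤ f (F (t + 1)) (μ (t + 1)) :=
      hFopt (t + 1) (F (t + 1)) (hFmem t)
    have h2 := key t (μ t)
    linarith
  -- nonnegativity of f values
  have fnonneg : ∀ t, 0 ≤ f (F (t + 1)) (μ t) := by
    intro t
    rw [hf]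
    refine Finset.sum_nonneg fun i _ => Finset.sum_nonneg fun j _ => ?_
    exact mul_nonneg ((hFmem t).1 i j) (sq_nonneg _)
  set s : ℕ → ℝ := fun t => ∑ j, ‖μ (t + 1) j - μ t j‖ ^ 2 with hs
  have snonneg : ∀ t, 0 ≤ s t := fun t =>
    Finset.sum_nonneg fun j _ => sq_nonneg _
  have partial_bound : ∀ N, ∑ t ∈ Finset.range N, s t ≤ (k : ℝ) * f (F 1) (μ 0) := by
    intro N
    have h : ∀ N, ∑ t ∈ Finset.range N, s t
        ≤ (k : ℝ) * (f (F 1) (μ 0) - f (F (N + 1)) (μ N)) := by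
      intro N
      induction N with
      | zero => simp
      | succ m ih =>
        rw [Finset.sum_range_succ]
        have := step m
        have h3 : s m ≤ (k:ℝ) * (f (F (m + 1)) (μ m) - f (F (m + 2)) (μ (m + 1))) := by
          have h := step m
          have h' : (1/(k:ℝ)) * s m ≤ f (F (m + 1)) (μ m) - f (F (m + 2)) (μ (m + 1)) := by
            linarith
          calc s m = (k:ℝ) * ((1/(k:ℝ)) * s m) := by field_simp
            _ ≤ (k:ℝ) * (f (F (m + 1)) (μ m) - f (F (m + 2)) (μ (m + 1))) :=
                mul_le_mul_of_nonneg_left h' hkpos.le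
        calc ∑ t ∈ Finset.range m, s t + s m
            ≤ (k : ℝ) * (f (F 1) (μ 0) - f (F (m + 1)) (μ m))
              + (k:ℝ) * (f (F (m + 1)) (μ m) - f (F (m + 2)) (μ (m + 1))) := by
              exact add_le_add ih h3
          _ = (k : ℝ) * (f (F 1) (μ 0) - f (F (m + 1 + 1)) (μ (m + 1))) := by ring_nf
    calc ∑ t ∈ Finset.range N, s t
        ≤ (k : ℝ) * (f (F 1) (μ 0) - f (F (N + 1)) (μ N)) := h N
      _ ≤ (k : ℝ) * f (F 1) (μ 0) := by nlinarith [fnonneg N]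
  have hsum : Summable s := summable_of_sum_range_le snonneg partial_bound
  refine ⟨step, hsum, Summable.tsum_le_of_sum_range_le hsum partial_bound, ?_⟩
  intro ε hε
  have htend := hsum.tendsto_atTop_zero
  obtain ⟨t, ht⟩ := (htend.eventually (gt_mem_nhds (show (0:ℝ) < ε^2 by positivity))).exists
  exact ⟨t, (Real.sqrt_lt' hε).mpr ht⟩
end

section
/- Fix k = 2 and n even. Suppose the data points x_1, ..., x_n ∈ ℝ^d admit a balanced partition [n] = C₁^♮ ⊔ C₂^♮ with |C₁^♮| = |C₂^♮| = n/2, together with centers μ₁^♮, μ₂^♮ such that ‖x_i − μ_{σ(i)}^♮‖ ≤ 1 for all i (where σ(i) denotes the planted label of i). Let μ₁^0, μ₂^0 ∈ ℝ^d be distinct, set Δ := ‖μ₁^♮ − μ₂^♮‖ and cos θ := |⟨(μ₁^0 − μ₂^0)/‖μ₁^0 − μ₂^0‖, (μ₁^♮ − μ₂^♮)/‖μ₁^♮ − μ₂^♮‖⟩|. If Δ·cos θ > 2, then every balanced partition [n] = C₁ ⊔ C₂ minimizing ∑_{i∈C₁} ‖x_i − μ₁^0‖² + ∑_{i∈C₂}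 ‖x_i − μ₂^0‖² over balanced partitions equals the planted partition {C₁^♮, C₂^♮} (up to swapping labels). -/
open Finset
open scoped RealInnerProductSpace

private lemma fin2_resolve : ∀ p q r : Fin 2, p ≠ q → r ≠ q → r = p := by decide

private lemma count_lemma {n : ℕ} (σ τ : Fin n → Fin 2)
    (hbal : ∀ p : Fin 2, (Finset.univ.filter fun i => σ i = p).card = n / 2)
    (hτbal : ∀ p : Fin 2, (Finset.univ.filter fun i => τ i = p).card = n / 2)
    (p q : Fin 2) (hpq : p ≠ q) (i : Fin n) (hi1 : τ i = q) (hi2 : σ i = p) :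
    ∃ j, τ j = p ∧ σ j = q := by
  by_contra hcon
  push_neg at hcon
  have hsub : (Finset.univ.filter fun k => τ k = p) ⊆
      (Finset.univ.filter fun k => σ k = p) := by
    intro k hk
    simp only [Finset.mem_filter, Finset.mem_univ, true_and] at hk ⊢
    exact fin2_resolve p q (σ k) hpq (hcon k hk)
  have heq := Finset.eq_of_subset_of_card_le hsub
    (le_of_eq ((hbal p).trans (hτbal p).symm))
  have hmem : i ∈ (Finset.univ.filter fun k => σ k = p) := by simp [hi2]
  rw [← heq] at hmem
  simp only [Finset.mem_filter, Finset.mem_univ, true_and] at hmem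
  rw [hmem] at hi1
  exact hpq hi1

private lemma aux_main {n d : ℕ}
    (x : Fin n → EuclideanSpace ℝ (Fin d))
    (σ : Fin n → Fin 2)
    (hbal : ∀ p : Fin 2, (Finset.univ.filter fun i => σ i = p).card = n / 2)
    (μt : Fin 2 → EuclideanSpace ℝ (Fin d))
    (hball : ∀ i, ‖x i - μt (σ i)‖ ≤ 1)
    (μ0 : Fin 2 → EuclideanSpace ℝ (Fin d))
    (hc : 2 * ‖μ0 0 - μ0 1‖ < ⟪μ0 0 - μ0 1, μt 0 - μt 1⟫)
    (τ : Fin n → Fin 2)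
    (hτbal : ∀ p : Fin 2, (Finset.univ.filter fun i => τ i = p).card = n / 2)
    (hτopt : ∀ τ' : Fin n → Fin 2,
      (∀ p : Fin 2, (Finset.univ.filter fun i => τ' i = p).card = n / 2) →
      ∑ i, ‖x i - μ0 (τ i)‖ ^ 2 ≤ ∑ i, ‖x i - μ0 (τ' i)‖ ^ 2) :
    ∀ i, τ i = σ i := by
  by_contra h
  push_neg at h
  obtain ⟨i, hi⟩ := h
  have h01 : (0 : Fin 2) ≠ 1 := by decide
  have h10 : (1 : Fin 2) ≠ 0 := by decide
  -- produce a, b with τ a = 1, σ a = 0, τ b = 0, σ b = 1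
  obtain ⟨a, b, hτa, hσa, hτb, hσb⟩ :
      ∃ a b, τ a = 1 ∧ σ a = 0 ∧ τ b = 0 ∧ σ b = 1 := by
    by_cases hσi : σ i = 0
    · have hτi : τ i = 1 := fin2_resolve 1 0 (τ i) h10 (fun h' => hi (h'.trans hσi.symm))
      obtain ⟨j, hj1, hj2⟩ := count_lemma σ τ hbal hτbal 0 1 h01 i hτi hσi
      exact ⟨i, j, hτi, hσi, hj1, hj2⟩
    · have hσi1 : σ i = 1 := fin2_resolve 1 0 (σ i) h10 hσi
      have hτi : τ i = 0 := fin2_resolve 0 1 (τ i) h01 (fun h' => hi (h'.trans hσi1.symm))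
      obtain ⟨j, hj1, hj2⟩ := count_lemma σ τ hbal hτbal 1 0 h10 i hτi hσi1
      exact ⟨j, i, hj1, hj2, hτi, hσi1⟩
  have hab : a ≠ b := by
    intro h'
    rw [h', hσb] at hσa
    exact h10 hσa
  -- the swapped assignment
  set τ2 : Fin n → Fin 2 := fun k => τ (Equiv.swap a b k) with hτ2def
  have hτ2bal : ∀ p : Fin 2, (Finset.univ.filter fun k => τ2 k = p).card = n / 2 := by
    intro p
    have hmap : (Finset.univ.filter fun k => τ2 k = p) =
        (Finset.univ.filter fun k => τ k = p).map (Equiv.swap a b).toEmbedding := by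
      ext k
      simp [hτ2def, Finset.mem_map_equiv]
    rw [hmap, Finset.card_map]
    exact hτbal p
  -- sum splitting
  have hsplit : ∀ ρ : Fin n → Fin 2,
      ∑ k, ‖x k - μ0 (ρ k)‖ ^ 2 =
        ‖x a - μ0 (ρ a)‖ ^ 2 + ‖x b - μ0 (ρ b)‖ ^ 2 +
          ∑ k ∈ Finset.univ \ {a, b}, ‖x k - μ0 (ρ k)‖ ^ 2 := by
    intro ρ
    rw [← Finset.sum_sdiff (Finset.subset_univ ({a, b} : Finset (Fin n))),
      Finset.sum_pair hab]
    ring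
  have htail : ∑ k ∈ Finset.univ \ {a, b}, ‖x k - μ0 (τ2 k)‖ ^ 2 =
      ∑ k ∈ Finset.univ \ {a, b}, ‖x k - μ0 (τ k)‖ ^ 2 := by
    refine Finset.sum_congr rfl fun k hk => ?_
    simp only [Finset.mem_sdiff, Finset.mem_insert, Finset.mem_singleton] at hk
    push_neg at hk
    rw [hτ2def]
    simp only []
    rw [Equiv.swap_apply_of_ne_of_ne hk.2.1 hk.2.2]
  have hτ2a : τ2 a = 0 := by rw [hτ2def]; simp [Equiv.swap_apply_left, hτb]
  have hτ2b : τ2 b = 1 := by rw [hτ2def]; simp [Equiv.swap_apply_right, hτa]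
  -- the key geometric inequality
  have hgeo : ‖x a - μ0 0‖ ^ 2 + ‖x b - μ0 1‖ ^ 2 <
      ‖x a - μ0 1‖ ^ 2 + ‖x b - μ0 0‖ ^ 2 := by
    set v := μ0 0 - μ0 1 with hv
    have hva : |⟪v, x a - μt 0⟫| ≤ ‖v‖ := by
      calc |⟪v, x a - μt 0⟫| ≤ ‖v‖ * ‖x a - μt 0‖ := abs_real_inner_le_norm _ _
        _ ≤ ‖v‖ * 1 := by
            have := hball a; rw [hσa] at this
            exact mul_le_mul_of_nonneg_left this (norm_nonneg v)
        _ = ‖v‖ := mul_one _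
    have hvb : |⟪v, x b - μt 1⟫| ≤ ‖v‖ := by
      calc |⟪v, x b - μt 1⟫| ≤ ‖v‖ * ‖x b - μt 1‖ := abs_real_inner_le_norm _ _
        _ ≤ ‖v‖ * 1 := by
            have := hball b; rw [hσb] at this
            exact mul_le_mul_of_nonneg_left this (norm_nonneg v)
        _ = ‖v‖ := mul_one _
    rw [abs_le] at hva hvb
    have ea : ⟪v, x a - μt 0⟫ = ⟪v, x a⟫ - ⟪v, μt 0⟫ := inner_sub_right _ _ _
    have eb : ⟪v, x b - μt 1⟫ = ⟪v, x b⟫ - ⟪v, μt 1⟫ := inner_sub_right _ _ _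
    have ec : ⟪v, μt 0 - μt 1⟫ = ⟪v, μt 0⟫ - ⟪v, μt 1⟫ := inner_sub_right _ _ _
    rw [ec] at hc
    -- so ⟪v, x a⟫ - ⟪v, x b⟫ > 0
    have hkey : ⟪v, x b⟫ < ⟪v, x a⟫ := by linarith [hva.1, hvb.2]
    have exa : ⟪v, x a⟫ = ⟪x a, μ0 0⟫ - ⟪x a, μ0 1⟫ := by
      rw [hv, inner_sub_left, real_inner_comm (μ0 0) (x a), real_inner_comm (μ0 1) (x a)]
    have exb : ⟪v, x b⟫ = ⟪x b, μ0 0⟫ - ⟪x b, μ0 1⟫ := by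
      rw [hv, inner_sub_left, real_inner_comm (μ0 0) (x b), real_inner_comm (μ0 1) (x b)]
    rw [exa, exb] at hkey
    have n1 : ‖x a - μ0 0‖ ^ 2 = ‖x a‖ ^ 2 - 2 * ⟪x a, μ0 0⟫ + ‖μ0 0‖ ^ 2 :=
      norm_sub_sq_real _ _
    have n2 : ‖x a - μ0 1‖ ^ 2 = ‖x a‖ ^ 2 - 2 * ⟪x a, μ0 1⟫ + ‖μ0 1‖ ^ 2 :=
      norm_sub_sq_real _ _
    have n3 : ‖x b - μ0 0‖ ^ 2 = ‖x b‖ ^ 2 - 2 * ⟪x b, μ0 0⟫ + ‖μ0 0‖ ^ 2 :=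
      norm_sub_sq_real _ _
    have n4 : ‖x b - μ0 1‖ ^ 2 = ‖x b‖ ^ 2 - 2 * ⟪x b, μ0 1⟫ + ‖μ0 1‖ ^ 2 :=
      norm_sub_sq_real _ _
    rw [n1, n2, n3, n4]
    linarith
  -- contradiction with optimality
  have hlt : ∑ k, ‖x k - μ0 (τ2 k)‖ ^ 2 < ∑ k, ‖x k - μ0 (τ k)‖ ^ 2 := by
    rw [hsplit τ2, hsplit τ, htail, hτ2a, hτ2b, hτa, hτb]
    linarith
  exact absurd (hτopt τ2 hτ2bal) (not_le.mpr hlt)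

theorem stmt3 (n d : ℕ) (hn : 0 < n) (h2 : 2 ∣ n)
    (x : Fin n → EuclideanSpace ℝ (Fin d))
    (σ : Fin n → Fin 2)
    (hbal : ∀ p : Fin 2, (Finset.univ.filter fun i => σ i = p).card = n / 2)
    (μt : Fin 2 → EuclideanSpace ℝ (Fin d))
    (hball : ∀ i, ‖x i - μt (σ i)‖ ≤ 1)
    (μ0 : Fin 2 → EuclideanSpace ℝ (Fin d)) (hne : μ0 0 ≠ μ0 1)
    (Δ : ℝ) (hΔ : Δ = ‖μt 0 - μt 1‖)
    (cosθ : ℝ)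
    (hcos : cosθ = |⟪‖μ0 0 - μ0 1‖⁻¹ • (μ0 0 - μ0 1),
      ‖μt 0 - μt 1‖⁻¹ • (μt 0 - μt 1)⟫|)
    (hsep : 2 < Δ * cosθ)
    (τ : Fin n → Fin 2)
    (hτbal : ∀ p : Fin 2, (Finset.univ.filter fun i => τ i = p).card = n / 2)
    (hτopt : ∀ τ' : Fin n → Fin 2,
      (∀ p : Fin 2, (Finset.univ.filter fun i => τ' i = p).card = n / 2) →
      ∑ i, ‖x i - μ0 (τ i)‖ ^ 2 ≤ ∑ i, ‖x i - μ0 (τ' i)‖ ^ 2) :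
    ∃ e : Equiv.Perm (Fin 2), ∀ i, τ i = e (σ i) := by
  have hv : (0 : ℝ) < ‖μ0 0 - μ0 1‖ := by
    rw [norm_pos_iff]
    exact sub_ne_zero_of_ne hne
  have hw : (0 : ℝ) < ‖μt 0 - μt 1‖ := by
    rcases eq_or_ne (μt 0) (μt 1) with h | h
    · exfalso
      rw [hΔ, h, sub_self, norm_zero, zero_mul] at hsep
      linarith
    · rw [norm_pos_iff]; exact sub_ne_zero_of_ne h
  -- compute |⟪v, w⟫| > 2‖v‖
  have habs : 2 * ‖μ0 0 - μ0 1‖ < |⟪μ0 0 - μ0 1, μt 0 - μt 1⟫| := by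
    have hcos' : cosθ = ‖μ0 0 - μ0 1‖⁻¹ * ‖μt 0 - μt 1‖⁻¹ *
        |⟪μ0 0 - μ0 1, μt 0 - μt 1⟫| := by
      rw [hcos, real_inner_smul_left, real_inner_smul_right, abs_mul, abs_mul,
        abs_of_nonneg (inv_nonneg.mpr (norm_nonneg _)),
        abs_of_nonneg (inv_nonneg.mpr (norm_nonneg _))]
      ring
    rw [hΔ, hcos'] at hsep
    have h1 : ‖μt 0 - μt 1‖ * (‖μ0 0 - μ0 1‖⁻¹ * ‖μt 0 - μt 1‖⁻¹ *
        |⟪μ0 0 - μ0 1, μt 0 - μt 1⟫|) =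
        ‖μ0 0 - μ0 1‖⁻¹ * |⟪μ0 0 - μ0 1, μt 0 - μt 1⟫| := by
      field_simp
    rw [h1] at hsep
    have := (lt_div_iff₀ hv).mp (by rw [div_eq_inv_mul]; exact hsep)
    linarith [this]
  rcases lt_abs.mp habs with hpos | hneg
  · exact ⟨Equiv.refl (Fin 2), fun i => by
      simpa using aux_main x σ hbal μt hball μ0 hpos τ hτbal hτopt i⟩
  · -- swapped case
    refine ⟨Equiv.swap 0 1, fun i => ?_⟩
    have hσ' : ∀ p : Fin 2,
        (Finset.univ.filter fun i => Equiv.swap (0 : Fin 2) 1 (σ i) = p).card = n / 2 := by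
      intro p
      have : (Finset.univ.filter fun i => Equiv.swap (0 : Fin 2) 1 (σ i) = p) =
          (Finset.univ.filter fun i => σ i = Equiv.swap (0 : Fin 2) 1 p) := by
        ext k
        simp [Equiv.swap_apply_eq_iff]
      rw [this]
      exact hbal _
    have hball' : ∀ i, ‖x i - (fun p => μt (Equiv.swap (0 : Fin 2) 1 p))
        (Equiv.swap (0 : Fin 2) 1 (σ i))‖ ≤ 1 := by
      intro i
      simp only [Equiv.swap_apply_self]
      exact hball i
    have hc' : 2 * ‖μ0 0 - μ0 1‖ <
        ⟪μ0 0 - μ0 1, (fun p => μt (Equiv.swap (0 : Fin 2) 1 p)) 0 -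
          (fun p => μt (Equiv.swap (0 : Fin 2) 1 p)) 1⟫ := by
      simp only [Equiv.swap_apply_left, Equiv.swap_apply_right]
      have e1 : ⟪μ0 0 - μ0 1, μt 1 - μt 0⟫ = -⟪μ0 0 - μ0 1, μt 0 - μt 1⟫ := by
        rw [← inner_neg_right]; congr 1; abel
      rw [e1]
      linarith
    exact aux_main x (fun i => Equiv.swap (0 : Fin 2) 1 (σ i)) hσ'
      (fun p => μt (Equiv.swap (0 : Fin 2) 1 p)) hball' μ0 hc' τ hτbal hτopt i
end

section
/- Fix k = 2 with data x_i = μ^♮_{σ(i)} + g_i where ‖g_i‖ ≤ 1 for all i. Let μ₁^0 ≠ μ₂^0, Δ := ‖μ₁^♮ − μ₂^♮‖, and cos θ the absolute cosine similarity between μ₁^0 − μ₂^0 and μ₁^♮ − μ₂^♮. If i is assigned (by an optimal balanced assignment to centers μ₁^0, μ₂^0, with indexing chosen so that ⟨μ₁^0 − μ₂^0, μ₁^♮ − μ₂^♮⟩ ≥ 0) to cluster 1 but σ(i) = 2, and j is assigned to cluster 2 but σ(j) = 1, then ⟨g_i − g_j, (μ₁^0 − μ₂^0)/‖μ₁^0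 − μ₂^0‖⟩ ≥ Δ·cos θ, and in particular Δ·cos θ ≤ ‖g_i‖ + ‖g_j‖ ≤ 2. -/
open Finset
open scoped RealInnerProductSpace

theorem stmt5 (n d : ℕ) (hn : 0 < n) (h2 : 2 ∣ n)
    (x g : Fin n → EuclideanSpace ℝ (Fin d))
    (σ : Fin n → Fin 2)
    (hbal : ∀ p : Fin 2, (Finset.univ.filter fun i => σ i = p).card = n / 2)
    (μt : Fin 2 → EuclideanSpace ℝ (Fin d))
    (hx : ∀ i, x i = μt (σ i) + g i)
    (hg : ∀ i, ‖g i‖ ≤ 1)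
    (μ0 : Fin 2 → EuclideanSpace ℝ (Fin d)) (hne : μ0 0 ≠ μ0 1)
    (Δ : ℝ) (hΔ : Δ = ‖μt 0 - μt 1‖)
    (cosθ : ℝ)
    (hcos : cosθ = |⟪‖μ0 0 - μ0 1‖⁻¹ • (μ0 0 - μ0 1),
      ‖μt 0 - μt 1‖⁻¹ • (μt 0 - μt 1)⟫|)
    (hindex : 0 ≤ ⟪μ0 0 - μ0 1, μt 0 - μt 1⟫)
    (τ : Fin n → Fin 2)
    (hτbal : ∀ p : Fin 2, (Finset.univ.filter fun i => τ i = p).card = n / 2)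
    (hτopt : ∀ τ' : Fin n → Fin 2,
      (∀ p : Fin 2, (Finset.univ.filter fun i => τ' i = p).card = n / 2) →
      ∑ i, ‖x i - μ0 (τ i)‖ ^ 2 ≤ ∑ i, ‖x i - μ0 (τ' i)‖ ^ 2)
    (i j : Fin n) (hi1 : τ i = 0) (hi2 : σ i = 1) (hj1 : τ j = 1) (hj2 : σ j = 0) :
    Δ * cosθ ≤ ⟪g i - g j, ‖μ0 0 - μ0 1‖⁻¹ • (μ0 0 - μ0 1)⟫ ∧
      Δ * cosθ ≤ ‖g i‖ + ‖g j‖ ∧ ‖g i‖ + ‖g j‖ ≤ 2 := by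
  have hij : i ≠ j := by
    intro h; rw [h, hj1] at hi1; exact absurd hi1 (by decide)
  -- the swapped assignment
  set τ' : Fin n → Fin 2 := τ ∘ Equiv.swap i j with hτ'def
  have hτ'bal : ∀ p : Fin 2, (Finset.univ.filter fun k => τ' k = p).card = n / 2 := by
    intro p
    rw [← hτbal p]
    apply Finset.card_bij' (fun k _ => Equiv.swap i j k) (fun k _ => Equiv.swap i j k)
    · intro a ha
      simp only [Finset.mem_filter, Finset.mem_univ, true_and, hτ'def, Function.comp] at ha ⊢
      simpa [Equiv.swap_apply_self] using ha
    · intro a ha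
      simp only [Finset.mem_filter, Finset.mem_univ, true_and, hτ'def, Function.comp] at ha ⊢
      simpa [Equiv.swap_apply_self] using ha
    · intro a _; simp
    · intro a _; simp
  have hopt := hτopt τ' hτ'bal
  -- split sums
  have hsplit : ∀ f : Fin n → ℝ, ∑ k, f k =
      f i + (f j + ∑ k ∈ ((Finset.univ.erase i).erase j), f k) := by
    intro f
    have h1 : insert j ((Finset.univ.erase i).erase j) = Finset.univ.erase i := by
      apply Finset.insert_erase
      simp [hij.symm]
    have h2 : insert i (Finset.univ.erase i) = (Finset.univ : Finset (Fin n)) := by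
      apply Finset.insert_erase; simp
    have huniv : (Finset.univ : Finset (Fin n)) =
        insert i (insert j ((Finset.univ.erase i).erase j)) := by rw [h1, h2]
    conv_lhs => rw [huniv]
    rw [Finset.sum_insert (by rw [h1]; simp),
      Finset.sum_insert (by simp [hij.symm])]
  have hτ'i : τ' i = 1 := by simp [hτ'def, Equiv.swap_apply_left, hj1]
  have hτ'j : τ' j = 0 := by simp [hτ'def, Equiv.swap_apply_right, hi1]
  have hrest : ∀ k ∈ ((Finset.univ.erase i).erase j), τ' k = τ k := by
    intro k hk
    simp only [Finset.mem_erase] at hk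
    simp [hτ'def, Equiv.swap_apply_of_ne_of_ne hk.2.1 hk.1]
  have hexch : ‖x i - μ0 0‖ ^ 2 + ‖x j - μ0 1‖ ^ 2 ≤
      ‖x i - μ0 1‖ ^ 2 + ‖x j - μ0 0‖ ^ 2 := by
    rw [hsplit (fun k => ‖x k - μ0 (τ k)‖ ^ 2),
        hsplit (fun k => ‖x k - μ0 (τ' k)‖ ^ 2)] at hopt
    have hsum : (∑ k ∈ ((Finset.univ.erase i).erase j), ‖x k - μ0 (τ' k)‖ ^ 2) =
        ∑ k ∈ ((Finset.univ.erase i).erase j), ‖x k - μ0 (τ k)‖ ^ 2 :=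
      Finset.sum_congr rfl fun k hk => by rw [hrest k hk]
    rw [hsum] at hopt
    simp only [hi1, hj1, hτ'i, hτ'j] at hopt
    linarith
  -- inner product form
  have hkey : 0 ≤ ⟪x i - x j, μ0 0 - μ0 1⟫ := by
    have e1 : ‖x i - μ0 0‖ ^ 2 = ‖x i‖ ^ 2 - 2 * ⟪x i, μ0 0⟫ + ‖μ0 0‖ ^ 2 :=
      norm_sub_sq_real _ _
    have e2 : ‖x i - μ0 1‖ ^ 2 = ‖x i‖ ^ 2 - 2 * ⟪x i, μ0 1⟫ + ‖μ0 1‖ ^ 2 :=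
      norm_sub_sq_real _ _
    have e3 : ‖x j - μ0 0‖ ^ 2 = ‖x j‖ ^ 2 - 2 * ⟪x j, μ0 0⟫ + ‖μ0 0‖ ^ 2 :=
      norm_sub_sq_real _ _
    have e4 : ‖x j - μ0 1‖ ^ 2 = ‖x j‖ ^ 2 - 2 * ⟪x j, μ0 1⟫ + ‖μ0 1‖ ^ 2 :=
      norm_sub_sq_real _ _
    rw [inner_sub_left, inner_sub_right, inner_sub_right]
    linarith [hexch, e1, e2, e3, e4]
  have hxi : x i = μt 1 + g i := by rw [hx i, hi2]
  have hxj : x j = μt 0 + g j := by rw [hx j, hj2]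
  have hkey2 : ⟪μt 0 - μt 1, μ0 0 - μ0 1⟫ ≤ ⟪g i - g j, μ0 0 - μ0 1⟫ := by
    have : x i - x j = (g i - g j) - (μt 0 - μt 1) := by
      rw [hxi, hxj]; abel
    rw [this, inner_sub_left] at hkey
    linarith
  have hu : (0:ℝ) < ‖μ0 0 - μ0 1‖ := by
    rw [norm_pos_iff]; exact sub_ne_zero_of_ne hne
  have huinner : ⟪g i - g j, ‖μ0 0 - μ0 1‖⁻¹ • (μ0 0 - μ0 1)⟫ =
      ‖μ0 0 - μ0 1‖⁻¹ * ⟪g i - g j, μ0 0 - μ0 1⟫ := real_inner_smul_right _ _ _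
  have h1 : Δ * cosθ ≤ ⟪g i - g j, ‖μ0 0 - μ0 1‖⁻¹ • (μ0 0 - μ0 1)⟫ := by
    rw [huinner]
    by_cases hw : μt 0 = μt 1
    · have : Δ = 0 := by rw [hΔ, hw]; simp
      rw [this, zero_mul]
      have : (0:ℝ) ≤ ⟪g i - g j, μ0 0 - μ0 1⟫ := by
        have : ⟪μt 0 - μt 1, μ0 0 - μ0 1⟫ = 0 := by rw [hw]; simp
        linarith [hkey2]
      positivity
    · have hwn : (0:ℝ) < ‖μt 0 - μt 1‖ := by
        rw [norm_pos_iff]; exact sub_ne_zero_of_ne hw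
      have hc : cosθ = ‖μ0 0 - μ0 1‖⁻¹ * ‖μt 0 - μt 1‖⁻¹ * ⟪μ0 0 - μ0 1, μt 0 - μt 1⟫ := by
        rw [hcos, real_inner_smul_left, real_inner_smul_right, ← mul_assoc]
        rw [abs_of_nonneg]
        positivity
      rw [hΔ, hc]
      have hsym : ⟪μ0 0 - μ0 1, μt 0 - μt 1⟫ = ⟪μt 0 - μt 1, μ0 0 - μ0 1⟫ :=
        real_inner_comm _ _
      have key : ‖μt 0 - μt 1‖ * (‖μ0 0 - μ0 1‖⁻¹ * ‖μt 0 - μt 1‖⁻¹ *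
          ⟪μ0 0 - μ0 1, μt 0 - μt 1⟫) =
          ‖μ0 0 - μ0 1‖⁻¹ * ⟪μt 0 - μt 1, μ0 0 - μ0 1⟫ := by
        rw [hsym]; field_simp
      rw [key]
      have := hkey2
      have h' := mul_le_mul_of_nonneg_left hkey2 (le_of_lt (inv_pos.mpr hu))
      linarith
  refine ⟨h1, ?_, ?_⟩
  · have hnu : ‖(‖μ0 0 - μ0 1‖⁻¹ • (μ0 0 - μ0 1))‖ = 1 := by
      rw [norm_smul, norm_inv, norm_norm, inv_mul_cancel₀ (ne_of_gt hu)]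
    calc Δ * cosθ ≤ ⟪g i - g j, ‖μ0 0 - μ0 1‖⁻¹ • (μ0 0 - μ0 1)⟫ := h1
      _ ≤ ‖g i - g j‖ * ‖(‖μ0 0 - μ0 1‖⁻¹ • (μ0 0 - μ0 1))‖ := real_inner_le_norm _ _
      _ = ‖g i - g j‖ := by rw [hnu, mul_one]
      _ ≤ ‖g i‖ + ‖g j‖ := norm_sub_le _ _
  · linarith [hg i, hg j]
end

section
/- Let Δ > 2 and let μ₁^♮, μ₂^♮ ∈ ℝ^d with ‖μ₁^♮ − μ₂^♮‖ = Δ. Suppose ‖μ₁^0 − μ₁^♮‖ ≤ δ and ‖μ₂^0 − μ₂^♮‖ ≤ δ with δ < ((Δ/2)² − 1)^{1/2}. Then, with cos θ := ⟨(μ₁^0 − μ₂^0)/‖μ₁^0 − μ₂^0‖, (μ₁^♮ − μ₂^♮)/‖μ₁^♮ − μ₂^♮‖⟩ (well-defined since μ₁^0 ≠ μ₂^0 under this assumption), it holds that Δ·cos θ > 2. -/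
open scoped RealInnerProductSpace

set_option maxHeartbeats 1000000 in
theorem stmt6 {d : ℕ} (Δ δ : ℝ) (hΔ : 2 < Δ)
    (μt1 μt2 μ01 μ02 : EuclideanSpace ℝ (Fin d))
    (hdist : ‖μt1 - μt2‖ = Δ)
    (h1 : ‖μ01 - μt1‖ ≤ δ) (h2 : ‖μ02 - μt2‖ ≤ δ)
    (hδ : δ < Real.sqrt ((Δ / 2) ^ 2 - 1)) :
    μ01 ≠ μ02 ∧
      2 < Δ * ⟪‖μ01 - μ02‖⁻¹ • (μ01 - μ02), ‖μt1 - μt2‖⁻¹ • (μt1 - μt2)⟫ := by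
  have hΔ0 : (0:ℝ) < Δ := by linarith
  set u := μt1 - μt2 with hu
  set e := (μ01 - μt1) - (μ02 - μt2) with he
  have hv : μ01 - μ02 = u + e := by rw [hu, he]; abel
  have hs : ‖e‖ ≤ 2 * δ := by
    calc ‖e‖ ≤ ‖μ01 - μt1‖ + ‖μ02 - μt2‖ := norm_sub_le _ _
    _ ≤ 2 * δ := by linarith
  have hδ0 : (0:ℝ) ≤ δ := le_trans (norm_nonneg _) h1
  have hsqpos : (0:ℝ) < (Δ / 2) ^ 2 - 1 := by nlinarith
  have hδ2 : δ ^ 2 < (Δ / 2) ^ 2 - 1 := by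
    have h := Real.sq_sqrt hsqpos.le
    nlinarith [Real.sqrt_nonneg ((Δ / 2) ^ 2 - 1)]
  have hs2 : ‖e‖ ^ 2 < Δ ^ 2 - 4 := by nlinarith [norm_nonneg e]
  have hcs : |⟪e, u⟫| ≤ ‖e‖ * ‖u‖ := abs_real_inner_le_norm e u
  have htlb : -(‖e‖ * Δ) ≤ ⟪e, u⟫ := by
    rw [hdist] at hcs
    have := abs_le.mp hcs
    linarith [this.1]
  have hsltΔ : ‖e‖ < Δ := by nlinarith [norm_nonneg e]
  have hvsq : ‖u + e‖ ^ 2 = Δ ^ 2 + 2 * ⟪e, u⟫ + ‖e‖ ^ 2 := by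
    rw [norm_add_sq_real, hdist, real_inner_comm]
  have hip : ⟪u + e, u⟫ = Δ ^ 2 + ⟪e, u⟫ := by
    rw [inner_add_left, real_inner_self_eq_norm_sq, hdist]
  have hvpos : 0 < ‖u + e‖ := by
    have h2' : (Δ - ‖e‖) ^ 2 ≤ ‖u + e‖ ^ 2 := by nlinarith
    nlinarith [norm_nonneg (u + e)]
  have hippos : 0 < ⟪u + e, u⟫ := by
    rw [hip]
    have hprod : ‖e‖ * Δ < Δ * Δ := mul_lt_mul_of_pos_right hsltΔ hΔ0
    have hΔsq : Δ ^ 2 = Δ * Δ := by ring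
    linarith
  have key : 2 * ‖u + e‖ < ⟪u + e, u⟫ := by
    have hgt : 4 * ‖u + e‖ ^ 2 < ⟪u + e, u⟫ ^ 2 := by
      rw [hvsq, hip]
      set t := ⟪e, u⟫ with ht
      set s := ‖e‖ with hsdef
      have hid : (Δ ^ 2 + t) ^ 2 - 4 * (Δ ^ 2 + 2 * t + s ^ 2)
          = (Δ ^ 2 + t - 4) ^ 2 + 4 * (Δ ^ 2 - 4 - s ^ 2) := by ring
      nlinarith [sq_nonneg (Δ ^ 2 + t - 4)]
    nlinarith
  have hne : μ01 ≠ μ02 := by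
    intro h
    rw [h] at hv
    have : ‖u + e‖ = 0 := by rw [← hv]; simp
    linarith
  refine ⟨hne, ?_⟩
  rw [hv, hdist, real_inner_smul_left, real_inner_smul_right]
  obtain ⟨P, hP⟩ : ∃ P, ⟪u + e, u⟫ = P := ⟨_, rfl⟩
  obtain ⟨N, hN⟩ : ∃ N, ‖u + e‖ = N := ⟨_, rfl⟩
  rw [hP, hN]
  rw [hP, hN] at key
  rw [hN] at hvpos
  have heq : Δ * (N⁻¹ * (Δ⁻¹ * P)) = P / N := by
    field_simp
  rw [heq, lt_div_iff₀ hvpos]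
  linarith
end

section
/- Let Δ > 2 and δ < Δ/2 − 1. Let a ≠ b, and let μ_a^♮, μ_b^♮, μ_a^0, μ_b^0 ∈ ℝ^d satisfy ‖μ_a^♮ − μ_b^♮‖ ≥ Δ, ‖μ_a^0 − μ_a^♮‖ ≤ δ, and ‖μ_b^0 − μ_b^♮‖ ≤ δ. Then (‖μ_a^0 − μ_b^♮‖² − ‖μ_a^0 − μ_a^♮‖²) / (2‖μ_a^0 − μ_b^0‖) ≥ Δ/2 − δ > 1. -/
theorem stmt7 {d : ℕ} (Δ δ : ℝ) (hΔ : 2 < Δ) (hδ0 : 0 ≤ δ) (hδ : δ < Δ / 2 - 1)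
    (μta μtb μ0a μ0b : EuclideanSpace ℝ (Fin d))
    (hsep : Δ ≤ ‖μta - μtb‖)
    (ha : ‖μ0a - μta‖ ≤ δ) (hb : ‖μ0b - μtb‖ ≤ δ) :
    Δ / 2 - δ ≤ (‖μ0a - μtb‖ ^ 2 - ‖μ0a - μta‖ ^ 2) / (2 * ‖μ0a - μ0b‖) ∧
      1 < Δ / 2 - δ := by
  have t1 : ‖μta - μtb‖ ≤ ‖μta - μ0a‖ + ‖μ0a - μtb‖ :=
    norm_sub_le_norm_sub_add_norm_sub _ _ _
  have t2 : ‖μ0a - μ0b‖ ≤ ‖μ0a - μtb‖ + ‖μtb - μ0b‖ :=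
    norm_sub_le_norm_sub_add_norm_sub _ _ _
  have t3 : ‖μta - μtb‖ ≤ ‖μta - μ0a‖ + ‖μ0a - μ0b‖ + ‖μ0b - μtb‖ := by
    calc ‖μta - μtb‖ ≤ ‖μta - μ0b‖ + ‖μ0b - μtb‖ := norm_sub_le_norm_sub_add_norm_sub _ _ _
      _ ≤ ‖μta - μ0a‖ + ‖μ0a - μ0b‖ + ‖μ0b - μtb‖ := by
          have := norm_sub_le_norm_sub_add_norm_sub μta μ0a μ0b
          linarith
  have e1 : ‖μta - μ0a‖ = ‖μ0a - μta‖ := norm_sub_rev _ _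
  have e2 : ‖μtb - μ0b‖ = ‖μ0b - μtb‖ := norm_sub_rev _ _
  have hB : (0:ℝ) ≤ ‖μ0a - μta‖ := norm_nonneg _
  have hD : (0:ℝ) < ‖μ0a - μ0b‖ := by
    linarith
  constructor
  · rw [le_div_iff₀ (by linarith)]
    nlinarith [norm_nonneg (μ0a - μtb)]
  · linarith
end

section
/- Let w ∈ ℝ^d with ‖w‖ ≥ Δ > 0 and let δ ≥ 0 with δ < Δ/2. Then for every v ∈ ℝ^d with ‖v‖ ≤ δ, (2⟨v, w⟩ + ‖w‖²)/(2(δ + ‖w + v‖)) ≥ (Δ − 2δ)/2 = Δ/2 − δ. -/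
open scoped RealInnerProductSpace

theorem stmt8 {d : ℕ} (Δ δ : ℝ) (hΔ : 0 < Δ) (hδ0 : 0 ≤ δ) (hδ : δ < Δ / 2)
    (w : EuclideanSpace ℝ (Fin d)) (hw : Δ ≤ ‖w‖) :
    ∀ v : EuclideanSpace ℝ (Fin d), ‖v‖ ≤ δ →
      (Δ - 2 * δ) / 2 ≤ (2 * ⟪v, w⟫ + ‖w‖ ^ 2) / (2 * (δ + ‖w + v‖)) ∧
      Δ / 2 - δ ≤ (2 * ⟪v, w⟫ + ‖w‖ ^ 2) / (2 * (δ + ‖w + v‖)) := by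
  intro v hv
  have hvn : 0 ≤ ‖v‖ := norm_nonneg v
  have ht : Δ - δ ≤ ‖w + v‖ := by
    have h1 : ‖w‖ ≤ ‖w + v‖ + ‖v‖ := by
      calc ‖w‖ = ‖(w + v) + (-v)‖ := by rw [add_neg_cancel_right]
        _ ≤ ‖w + v‖ + ‖-v‖ := norm_add_le _ _
        _ = ‖w + v‖ + ‖v‖ := by rw [norm_neg]
    linarith
  have hden : 0 < 2 * (δ + ‖w + v‖) := by linarith
  have hid : 2 * ⟪v, w⟫ + ‖w‖ ^ 2 = ‖w + v‖ ^ 2 - ‖v‖ ^ 2 := by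
    have h := norm_add_sq_real w v
    rw [real_inner_comm] at h
    linarith
  have key : (Δ - 2 * δ) / 2 ≤ (2 * ⟪v, w⟫ + ‖w‖ ^ 2) / (2 * (δ + ‖w + v‖)) := by
    rw [hid, div_le_div_iff₀ (by norm_num) hden]
    nlinarith [mul_nonneg (sub_nonneg.mpr hv) (by linarith : (0:ℝ) ≤ δ + ‖v‖),
      mul_nonneg (by linarith : (0:ℝ) ≤ ‖w + v‖ - δ - (Δ - 2 * δ)) (by linarith : (0:ℝ) ≤ ‖w + v‖ + δ)]
  exact ⟨key, by linarith⟩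
end

section
/- Define h(π, μ) := ∑_{p∈[k]} ∑_{j∈[k]} π_{pj} ‖μ_j − μ^♮_p‖² for π ∈ U_{k,k} and μ ∈ ℝ^{d×k}, where μ₁^♮, ..., μ_k^♮ ∈ ℝ^d are distinct. Then every local minimizer of h over U_{k,k} × ℝ^{d×k} is a global minimizer; moreover the global minimum value is 0 and is attained exactly at pairs (π, μ) where π = (1/k)P for a permutation matrix P and μ is the corresponding permutation of the columns of μ^♮. -/
open Finset
open scoped RealInnerProductSpace

lemma quad_coeff_zero (a b δ : ℝ) (hδ : 0 < δ)
    (h : ∀ t : ℝ, |t| < δ → 0 ≤ a * t + b * t ^ 2) : a = 0 := by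
  by_contra ha
  have ha2 : 0 < |a| := abs_pos.2 ha
  set s : ℝ := min (δ / (2 * (|a| + 1))) (1 / (2 * (|b| + 1))) with hs
  have hb1 : (0:ℝ) < |b| + 1 := by positivity
  have hs0 : 0 < s := by
    apply lt_min <;> positivity
  have hs1 : s ≤ δ / (2 * (|a| + 1)) := min_le_left _ _
  have hs2 : s ≤ 1 / (2 * (|b| + 1)) := min_le_right _ _
  have ht : |(-a * s)| < δ := by
    rw [abs_mul, abs_neg, abs_of_pos hs0]
    calc |a| * s ≤ |a| * (δ / (2 * (|a| + 1))) := by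
          exact mul_le_mul_of_nonneg_left hs1 (abs_nonneg a)
      _ < δ := by
          rw [mul_div_assoc', div_lt_iff₀ (by positivity)]
          nlinarith [abs_nonneg a]
  have := h (-a * s) ht
  have hsb : s * |b| < 1 := by
    calc s * |b| ≤ (1 / (2 * (|b| + 1))) * |b| := by
          exact mul_le_mul_of_nonneg_right hs2 (abs_nonneg b)
      _ < 1 := by rw [div_mul_eq_mul_div, div_lt_iff₀ (by positivity)]; nlinarith [abs_nonneg b]
  have hba : b * (-a * s) ^ 2 ≤ |b| * (a * s)^2 := by
    have : b ≤ |b| := le_abs_self b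
    nlinarith [sq_nonneg (a*s)]
  have key : a * (-a * s) + b * (-a * s) ^ 2 < 0 := by
    have h1 : a * (-a * s) = -(a^2 * s) := by ring
    have h2 : |b| * (a*s)^2 = (a^2 * s) * (s * |b|) := by ring
    have h3 : 0 < a^2 * s := by positivity
    nlinarith
  linarith

lemma exists_small_t (ε C : ℝ) (hε : 0 < ε) (hC : 0 ≤ C) :
    ∃ t : ℝ, 0 < t ∧ t ≤ 1 ∧ t ^ 2 * C < ε ^ 2 := by
  refine ⟨min 1 (ε ^ 2 / (2 * (C + 1))), lt_min one_pos (by positivity), min_le_left _ _, ?_⟩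
  set t := min 1 (ε ^ 2 / (2 * (C + 1))) with ht
  have ht0 : 0 < t := lt_min one_pos (by positivity)
  have ht1 : t ≤ 1 := min_le_left _ _
  have ht2 : t ≤ ε ^ 2 / (2 * (C + 1)) := min_le_right _ _
  have : t ^ 2 * C ≤ t * C := by
    nlinarith [sq_nonneg t,
      mul_le_mul_of_nonneg_right (mul_le_mul_of_nonneg_right ht1 (le_of_lt ht0)) hC]
  have : t * C ≤ (ε ^ 2 / (2 * (C + 1))) * C := mul_le_mul_of_nonneg_right ht2 hC
  have hlt : (ε ^ 2 / (2 * (C + 1))) * C < ε ^ 2 := by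
    rw [div_mul_eq_mul_div, div_lt_iff₀ (by positivity)]
    nlinarith
  linarith

lemma h_expand {k : ℕ} {E : Type*} [NormedAddCommGroup E] [InnerProductSpace ℝ E]
    (μt μ ν : Fin k → E) (π : Matrix (Fin k) (Fin k) ℝ) (t : ℝ) :
    ∑ p, ∑ j, π p j * ‖(μ j + t • ν j) - μt p‖ ^ 2
      = (∑ p, ∑ j, π p j * ‖μ j - μt p‖ ^ 2)
        + t * (2 * ∑ j, ⟪∑ p, π p j • (μ j - μt p), ν j⟫)
        + t ^ 2 * ∑ j, (∑ p, π p j) * ‖ν j‖ ^ 2 := by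
  have key : ∀ p j, π p j * ‖(μ j + t • ν j) - μt p‖ ^ 2
      = π p j * ‖μ j - μt p‖ ^ 2 + t * (2 * (π p j * ⟪μ j - μt p, ν j⟫))
        + t ^ 2 * (π p j * ‖ν j‖ ^ 2) := by
    intro p j
    have hx : (μ j + t • ν j) - μt p = (μ j - μt p) + t • ν j := by abel
    rw [hx, norm_add_sq_real, real_inner_smul_right, norm_smul]
    simp [mul_pow, abs_mul_abs_self]
    ring
  calc ∑ p, ∑ j, π p j * ‖(μ j + t • ν j) - μt p‖ ^ 2
      = ∑ p, ∑ j, (π p j * ‖μ j - μt p‖ ^ 2 + t * (2 * (π p j * ⟪μ j - μt p, ν j⟫))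
          + t ^ 2 * (π p j * ‖ν j‖ ^ 2)) := by
        exact Finset.sum_congr rfl fun p _ => Finset.sum_congr rfl fun j _ => key p j
    _ = (∑ p, ∑ j, π p j * ‖μ j - μt p‖ ^ 2)
        + t * (2 * ∑ p, ∑ j, π p j * ⟪μ j - μt p, ν j⟫)
        + t ^ 2 * ∑ p, ∑ j, π p j * ‖ν j‖ ^ 2 := by
        simp [Finset.sum_add_distrib, Finset.mul_sum]
    _ = _ := by
        have h1 : ∀ j, ⟪∑ p, π p j • (μ j - μt p), ν j⟫ = ∑ p, π p j * ⟪μ j - μt p, ν j⟫ := by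
          intro j; rw [sum_inner]
          exact Finset.sum_congr rfl fun p _ => real_inner_smul_left _ _ _
        have h2 : ∀ j, (∑ p, π p j) * ‖ν j‖ ^ 2 = ∑ p, π p j * ‖ν j‖ ^ 2 :=
          fun j => Finset.sum_mul _ _ _
        simp only [h1, h2]
        congr 1
        · congr 2
          rw [Finset.sum_comm]
        · congr 1
          rw [Finset.sum_comm]

set_option maxHeartbeats 1000000 in
theorem stmt12 (k d : ℕ) (hk : 0 < k)
    (μt : Fin k → EuclideanSpace ℝ (Fin d)) (hdistinct : Function.Injective μt)
    (Ukk : Set (Matrix (Fin k) (Fin k) ℝ))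
    (hUkk : Ukk = {π | (∀ p j, 0 ≤ π p j) ∧ (∀ j, ∑ p, π p j = 1 / (k : ℝ)) ∧
      (∀ p, ∑ j, π p j = 1 / (k : ℝ))})
    (h : Matrix (Fin k) (Fin k) ℝ → (Fin k → EuclideanSpace ℝ (Fin d)) → ℝ)
    (hh : ∀ π μ, h π μ = ∑ p, ∑ j, π p j * ‖μ j - μt p‖ ^ 2) :
    (∀ π ∈ Ukk, ∀ μ : Fin k → EuclideanSpace ℝ (Fin d),
      (∃ ε > (0 : ℝ), ∀ π' ∈ Ukk, ∀ μ' : Fin k → EuclideanSpace ℝ (Fin d),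
        (∑ p, ∑ j, (π' p j - π p j) ^ 2) + ∑ j, ‖μ' j - μ j‖ ^ 2 < ε ^ 2 →
        h π μ ≤ h π' μ') →
      ∀ π' ∈ Ukk, ∀ μ' : Fin k → EuclideanSpace ℝ (Fin d), h π μ ≤ h π' μ') ∧
    (∀ π ∈ Ukk, ∀ μ : Fin k → EuclideanSpace ℝ (Fin d), 0 ≤ h π μ) ∧
    (∀ π ∈ Ukk, ∀ μ : Fin k → EuclideanSpace ℝ (Fin d),
      (h π μ = 0 ↔ ∃ e : Equiv.Perm (Fin k),
        (∀ p j, π p j = if j = e p then 1 / (k : ℝ) else 0) ∧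
        ∀ j, μ j = μt (e.symm j))) := by
  have hk0 : (0:ℝ) < (k:ℝ) := by exact_mod_cast hk
  have hk' : (0:ℝ) < 1 / (k:ℝ) := by positivity
  -- nonnegativity
  have hnonneg : ∀ π ∈ Ukk, ∀ μ : Fin k → EuclideanSpace ℝ (Fin d), 0 ≤ h π μ := by
    intro π hπ μ
    rw [hUkk] at hπ
    rw [hh]
    exact Finset.sum_nonneg fun p _ => Finset.sum_nonneg fun j _ =>
      mul_nonneg (hπ.1 p j) (by positivity)
  -- local implies global (main part)
  have hmain : ∀ π ∈ Ukk, ∀ μ : Fin k → EuclideanSpace ℝ (Fin d),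
      (∃ ε > (0 : ℝ), ∀ π' ∈ Ukk, ∀ μ' : Fin k → EuclideanSpace ℝ (Fin d),
        (∑ p, ∑ j, (π' p j - π p j) ^ 2) + ∑ j, ‖μ' j - μ j‖ ^ 2 < ε ^ 2 →
        h π μ ≤ h π' μ') →
      ∀ π' ∈ Ukk, ∀ μ' : Fin k → EuclideanSpace ℝ (Fin d), h π μ ≤ h π' μ' := by
    intro π hπ μ hloc π' hπ' μ'
    suffices hkey : h π μ ≤ 0 by exact hkey.trans (hnonneg π' hπ' μ')
    by_contra hpos0
    push_neg at hpos0
    obtain ⟨ε, hε, hmin⟩ := hloc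
    have hπ2 := hπ
    rw [hUkk] at hπ2
    obtain ⟨hpos, hcol, hrow⟩ := hπ2
    -- convex combination stays in Ukk
    have hconv : ∀ (t : ℝ), 0 ≤ t → t ≤ 1 → ∀ A ∈ Ukk, ∀ B ∈ Ukk,
        (fun p j => (1-t) * A p j + t * B p j : Matrix (Fin k) (Fin k) ℝ) ∈ Ukk := by
      intro t ht0 ht1 A hA B hB
      rw [hUkk] at hA hB ⊢
      obtain ⟨hA1, hA2, hA3⟩ := hA
      obtain ⟨hB1, hB2, hB3⟩ := hB
      refine ⟨fun p j => add_nonneg (mul_nonneg (by linarith) (hA1 p j))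
        (mul_nonneg ht0 (hB1 p j)), fun j => ?_, fun p => ?_⟩
      · rw [Finset.sum_add_distrib, ← Finset.mul_sum, ← Finset.mul_sum, hA2 j, hB2 j]; ring
      · rw [Finset.sum_add_distrib, ← Finset.mul_sum, ← Finset.mul_sum, hA3 p, hB3 p]; ring
    -- mixing formula for h in first argument
    have hmix : ∀ (t : ℝ) (A B : Matrix (Fin k) (Fin k) ℝ)
        (ν : Fin k → EuclideanSpace ℝ (Fin d)),
        h (fun p j => (1-t) * A p j + t * B p j) ν = (1-t) * h A ν + t * h B ν := by
      intro t A B ν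
      simp only [hh]
      rw [hh (fun p j => (1-t) * A p j + t * B p j) ν]
      rw [Finset.mul_sum, Finset.mul_sum, ← Finset.sum_add_distrib]
      refine Finset.sum_congr rfl fun p _ => ?_
      rw [Finset.mul_sum, Finset.mul_sum, ← Finset.sum_add_distrib]
      exact Finset.sum_congr rfl fun j _ => by ring
    -- STEP A : gradient condition
    set g : Fin k → EuclideanSpace ℝ (Fin d) := fun j => ∑ p, π p j • (μ j - μt p) with hg
    have hGnn : (0:ℝ) ≤ ∑ j, ‖g j‖ ^ 2 := Finset.sum_nonneg fun j _ => by positivity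
    obtain ⟨δ, hδ0, hδ1, hδ2⟩ := exists_small_t ε (∑ j, ‖g j‖ ^ 2) hε hGnn
    have hacoeff : (2 * ∑ j, ⟪g j, g j⟫ : ℝ) = 0 := by
      apply quad_coeff_zero _ (∑ j, (∑ p, π p j) * ‖g j‖ ^ 2) δ hδ0
      intro t ht
      have hdist : (∑ p, ∑ j, (π p j - π p j) ^ 2)
          + ∑ j, ‖(μ j + t • g j) - μ j‖ ^ 2 < ε ^ 2 := by
        have h1 : ∀ j, ‖(μ j + t • g j) - μ j‖ ^ 2 = t ^ 2 * ‖g j‖ ^ 2 := by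
          intro j
          rw [add_sub_cancel_left, norm_smul, mul_pow, Real.norm_eq_abs, sq_abs]
        have h2 : t ^ 2 ≤ δ ^ 2 := by nlinarith [abs_nonneg t, sq_abs t]
        have e1 : (∑ p, ∑ j, ((π p j - π p j : ℝ)) ^ 2) = 0 := by simp
        have e2 : ∑ j, ‖(μ j + t • g j) - μ j‖ ^ 2 = t ^ 2 * ∑ j, ‖g j‖ ^ 2 := by
          rw [Finset.mul_sum]; exact Finset.sum_congr rfl fun j _ => h1 j
        rw [e1, e2, zero_add]
        calc t ^ 2 * ∑ j, ‖g j‖ ^ 2 ≤ δ ^ 2 * ∑ j, ‖g j‖ ^ 2 :=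
              mul_le_mul_of_nonneg_right h2 hGnn
          _ < ε ^ 2 := hδ2
      have hle := hmin π hπ (fun j => μ j + t • g j) hdist
      rw [hh, hh] at hle
      have hexp := h_expand μt μ g π t
      rw [hg] at hexp ⊢
      rw [hexp] at hle
      nlinarith [hle]
    have hgzero : ∀ j, g j = 0 := by
      have hsum : ∑ j, ⟪g j, g j⟫ = 0 := by linarith
      intro j
      have hterm : ∀ i ∈ Finset.univ, (0:ℝ) ≤ ⟪g i, g i⟫ := fun i _ => real_inner_self_nonneg
      have := (Finset.sum_eq_zero_iff_of_nonneg hterm).1 hsum j (mem_univ j)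
      exact inner_self_eq_zero.1 this
    -- STEP B : linear optimality against any member of Ukk
    have hlin : ∀ π'' ∈ Ukk, h π μ ≤ h π'' μ := by
      intro π'' hπ''
      set C := ∑ p, ∑ j, (π'' p j - π p j) ^ 2 with hC
      have hCnn : 0 ≤ C := Finset.sum_nonneg fun p _ => Finset.sum_nonneg fun j _ => sq_nonneg _
      obtain ⟨t, ht0, ht1, ht2⟩ := exists_small_t ε C hε hCnn
      set πt : Matrix (Fin k) (Fin k) ℝ := fun p j => (1-t) * π p j + t * π'' p j with hπt
      have hmem : πt ∈ Ukk := hconv t (le_of_lt ht0) ht1 π hπ π'' hπ''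
      have hdist : (∑ p, ∑ j, (πt p j - π p j) ^ 2) + ∑ j, ‖μ j - μ j‖ ^ 2 < ε ^ 2 := by
        have h1 : ∀ p j, (πt p j - π p j) ^ 2 = t ^ 2 * (π'' p j - π p j) ^ 2 := by
          intro p j; simp only [hπt]; ring
        have e1 : (∑ p, ∑ j, (πt p j - π p j) ^ 2) = t ^ 2 * C := by
          rw [hC, Finset.mul_sum]
          refine Finset.sum_congr rfl fun p _ => ?_
          rw [Finset.mul_sum]
          exact Finset.sum_congr rfl fun j _ => h1 p j
        have e2 : ∑ j, ‖(μ j : EuclideanSpace ℝ (Fin d)) - μ j‖ ^ 2 = 0 := by simp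
        rw [e1, e2, add_zero]
        exact ht2
      have hle := hmin πt hmem μ hdist
      rw [hmix t π π'' μ] at hle
      nlinarith
    -- STEP C: Birkhoff decomposition of k • π
    have hds : (k : ℝ) • π ∈ doublyStochastic ℝ (Fin k) := by
      rw [mem_doublyStochastic_iff_sum]
      refine ⟨fun i j => ?_, fun i => ?_, fun j => ?_⟩
      · simp only [Matrix.smul_apply, smul_eq_mul]
        exact mul_nonneg (le_of_lt hk0) (hpos i j)
      · simp only [Matrix.smul_apply, smul_eq_mul]
        rw [← Finset.mul_sum, hrow i]; field_simp
      · simp only [Matrix.smul_apply, smul_eq_mul]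
        rw [← Finset.mul_sum, hcol j]; field_simp
    obtain ⟨w, hw0, hw1, hw2⟩ := exists_eq_sum_perm_of_mem_doublyStochastic hds
    -- permutation vertex matrices
    have hpm : ∀ (σ : Equiv.Perm (Fin k)) p j,
        (σ.permMatrix ℝ) p j = if σ p = j then 1 else 0 := by
      intro σ p j
      simp [Equiv.Perm.permMatrix, PEquiv.toMatrix_apply, Equiv.toPEquiv_apply, eq_comm]
    set vm : Equiv.Perm (Fin k) → Matrix (Fin k) (Fin k) ℝ :=
      fun σ p j => if σ p = j then 1/(k:ℝ) else 0 with hvm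
    have hvmem : ∀ σ, vm σ ∈ Ukk := by
      intro σ
      rw [hUkk]
      refine ⟨fun p j => ?_, fun j => ?_, fun p => ?_⟩
      · simp only [hvm]; split <;> positivity
      · have h1 : ∀ p : Fin k, (if σ p = j then 1/(k:ℝ) else 0)
            = if p = σ.symm j then 1/(k:ℝ) else 0 := by
          intro p
          by_cases hc : σ p = j
          · rw [if_pos hc, if_pos (by rw [← hc]; simp)]
          · rw [if_neg hc, if_neg (fun hcc => hc (by rw [hcc]; simp))]
        simp only [hvm, h1]
        rw [Finset.sum_ite_eq' Finset.univ (σ.symm j) (fun _ => 1/(k:ℝ))]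
        simp
      · simp only [hvm]
        rw [Finset.sum_ite_eq Finset.univ (σ p) (fun _ => 1/(k:ℝ))]
        simp
    -- entries of π as weighted combination
    have hπeq : ∀ p j, π p j = ∑ σ, w σ * vm σ p j := by
      intro p j
      have h1 : ((k:ℝ) • π) p j = (∑ σ, w σ • σ.permMatrix ℝ) p j := by rw [hw2]
      have h2 : ((k:ℝ) • π) p j = (k:ℝ) * π p j := rfl
      have h3 : (∑ σ, w σ • σ.permMatrix ℝ) p j = ∑ σ : Equiv.Perm (Fin k),
          w σ * (if σ p = j then 1 else 0) := by
        rw [Matrix.sum_apply]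
        exact Finset.sum_congr rfl fun σ _ => by
          simp [Matrix.smul_apply, hpm σ p j, Equiv.toPEquiv_apply]
      have h4 : ∑ σ : Equiv.Perm (Fin k), w σ * (if σ p = j then 1 else 0)
          = (k:ℝ) * ∑ σ, w σ * vm σ p j := by
        rw [Finset.mul_sum]
        refine Finset.sum_congr rfl fun σ _ => ?_
        simp only [hvm]
        split <;> field_simp <;> simp
      have : (k:ℝ) * π p j = (k:ℝ) * ∑ σ, w σ * vm σ p j := by
        rw [← h2, h1, h3, h4]
      exact mul_left_cancel₀ (ne_of_gt hk0) this
    -- h π μ as weighted average of vertices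
    have havg : h π μ = ∑ σ, w σ * h (vm σ) μ := by
      have hRHS : ∑ σ, w σ * h (vm σ) μ
          = ∑ σ, ∑ p, ∑ j, w σ * (vm σ p j * ‖μ j - μt p‖ ^ 2) := by
        refine Finset.sum_congr rfl fun σ _ => ?_
        rw [hh, Finset.mul_sum]
        refine Finset.sum_congr rfl fun p _ => ?_
        rw [Finset.mul_sum]
      rw [hh, hRHS]
      conv_rhs => rw [Finset.sum_comm]
      refine Finset.sum_congr rfl fun p _ => ?_
      conv_rhs => rw [Finset.sum_comm]
      refine Finset.sum_congr rfl fun j _ => ?_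
      rw [hπeq p j, Finset.sum_mul]
      exact Finset.sum_congr rfl fun σ _ => by ring
    -- STEP G : every permutation in the support is optimal
    have hopt : ∀ σ, w σ ≠ 0 → h (vm σ) μ = h π μ := by
      intro σ hσ
      have hz : ∑ σ', w σ' * (h (vm σ') μ - h π μ) = 0 := by
        have : ∑ σ', w σ' * (h (vm σ') μ - h π μ)
            = (∑ σ', w σ' * h (vm σ') μ) - (∑ σ', w σ') * h π μ := by
          rw [Finset.sum_mul, ← Finset.sum_sub_distrib]
          exact Finset.sum_congr rfl fun σ' _ => by ring
        rw [this, hw1, ← havg]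
        ring
      have hterm : ∀ σ' ∈ Finset.univ, (0:ℝ) ≤ w σ' * (h (vm σ') μ - h π μ) :=
        fun σ' _ => mul_nonneg (hw0 σ') (by linarith [hlin (vm σ') (hvmem σ')])
      have := (Finset.sum_eq_zero_iff_of_nonneg hterm).1 hz σ (mem_univ σ)
      rcases mul_eq_zero.1 this with hc | hc
      · exact absurd hc hσ
      · linarith
    -- STEP H : find a positive mass entry with distinct centers
    have hex : ∃ p0 j0, 0 < π p0 j0 * ‖μ j0 - μt p0‖ ^ 2 := by
      by_contra hcon
      push_neg at hcon
      have : h π μ ≤ 0 := by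
        rw [hh]
        exact Finset.sum_nonpos fun p _ => Finset.sum_nonpos fun j _ => hcon p j
      linarith
    obtain ⟨p0, j0, hpj⟩ := hex
    have hp0 : 0 < π p0 j0 := by
      rcases lt_or_eq_of_le (hpos p0 j0) with hc | hc
      · exact hc
      · exfalso; rw [← hc] at hpj; simp at hpj
    have hne0 : μ j0 ≠ μt p0 := by
      intro hc
      rw [hc] at hpj; simp at hpj
    -- find σ0 in the support matching (p0, j0)
    have hex2 : ∃ σ0, 0 < w σ0 * vm σ0 p0 j0 := by
      by_contra hcon
      push_neg at hcon
      have : π p0 j0 ≤ 0 := by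
        rw [hπeq p0 j0]
        exact Finset.sum_nonpos fun σ _ => hcon σ
      linarith
    obtain ⟨σ0, hσ0⟩ := hex2
    have hw0' : 0 < w σ0 := by
      rcases lt_or_eq_of_le (hw0 σ0) with hc | hc
      · exact hc
      · exfalso; rw [← hc] at hσ0; simp at hσ0
    have hmatch : σ0 p0 = j0 := by
      by_contra hc
      have : vm σ0 p0 j0 = 0 := by simp only [hvm]; rw [if_neg hc]
      rw [this] at hσ0; simp at hσ0
    -- STEP I : the descent direction
    set ν : Fin k → EuclideanSpace ℝ (Fin d) := fun j => μt (σ0.symm j) - μ j with hν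
    have hsymm : σ0.symm j0 = p0 := by rw [← hmatch]; simp
    have hν0 : ν j0 ≠ 0 := by
      simp only [hν, hsymm]
      exact sub_ne_zero.2 (Ne.symm hne0)
    have hνpos : 0 < ∑ j, ‖ν j‖ ^ 2 := by
      have h1 : 0 < ‖ν j0‖ ^ 2 := by
        have := norm_pos_iff.mpr hν0
        positivity
      have h2 : ‖ν j0‖ ^ 2 ≤ ∑ j, ‖ν j‖ ^ 2 :=
        Finset.single_le_sum (f := fun j => ‖ν j‖ ^ 2) (fun j _ => by positivity) (mem_univ j0)
      linarith
    set C := (∑ p, ∑ j, (vm σ0 p j - π p j) ^ 2) + ∑ j, ‖ν j‖ ^ 2 with hCdef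
    have hCnn : 0 ≤ C :=
      add_nonneg (Finset.sum_nonneg fun p _ => Finset.sum_nonneg fun j _ => sq_nonneg _)
        (le_of_lt hνpos)
    obtain ⟨t, ht0, ht1, ht2⟩ := exists_small_t ε C hε hCnn
    set πt : Matrix (Fin k) (Fin k) ℝ := fun p j => (1-t) * π p j + t * vm σ0 p j with hπt
    have hmem : πt ∈ Ukk := hconv t (le_of_lt ht0) ht1 π hπ (vm σ0) (hvmem σ0)
    set μ2 : Fin k → EuclideanSpace ℝ (Fin d) := fun j => μ j + t • ν j with hμ2
    have hdist : (∑ p, ∑ j, (πt p j - π p j) ^ 2) + ∑ j, ‖μ2 j - μ j‖ ^ 2 < ε ^ 2 := by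
      have e1 : (∑ p, ∑ j, (πt p j - π p j) ^ 2)
          = t ^ 2 * ∑ p, ∑ j, (vm σ0 p j - π p j) ^ 2 := by
        rw [Finset.mul_sum]
        refine Finset.sum_congr rfl fun p _ => ?_
        rw [Finset.mul_sum]
        refine Finset.sum_congr rfl fun j _ => ?_
        simp only [hπt]; ring
      have e2 : ∑ j, ‖μ2 j - μ j‖ ^ 2 = t ^ 2 * ∑ j, ‖ν j‖ ^ 2 := by
        rw [Finset.mul_sum]
        refine Finset.sum_congr rfl fun j _ => ?_
        simp only [hμ2]
        rw [add_sub_cancel_left, norm_smul, mul_pow, Real.norm_eq_abs, sq_abs]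
      rw [e1, e2, ← mul_add, ← hCdef]
      exact ht2
    have hle := hmin πt hmem μ2 hdist
    -- compute h πt μ2
    have hgrad : ∀ j, ∑ p, πt p j • (μ j - μt p) = (-(t/(k:ℝ))) • ν j := by
      intro j
      have e1 : ∑ p, πt p j • (μ j - μt p)
          = (1-t) • g j + t • ∑ p, vm σ0 p j • (μ j - μt p) := by
        simp only [hg]
        rw [Finset.smul_sum, Finset.smul_sum, ← Finset.sum_add_distrib]
        refine Finset.sum_congr rfl fun p _ => ?_
        simp only [hπt, add_smul, smul_smul]
      have e2 : ∑ p, vm σ0 p j • (μ j - μt p) = (1/(k:ℝ)) • (μ j - μt (σ0.symm j)) := by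
        have h1 : ∀ p : Fin k, vm σ0 p j • (μ j - μt p)
            = if p = σ0.symm j then (1/(k:ℝ)) • (μ j - μt (σ0.symm j)) else 0 := by
          intro p
          by_cases hc : σ0 p = j
          · have hp : p = σ0.symm j := by rw [← hc]; simp
            rw [if_pos hp]
            simp only [hvm]
            rw [if_pos hc, hp]
          · have hp : ¬ (p = σ0.symm j) := fun hcc => hc (by rw [hcc]; simp)
            rw [if_neg hp]
            simp only [hvm]
            rw [if_neg hc, zero_smul]
        rw [Finset.sum_congr rfl fun p _ => h1 p]
        rw [Finset.sum_ite_eq' Finset.univ (σ0.symm j)]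
        simp
      rw [e1, hgzero j, smul_zero, zero_add, e2, smul_smul]
      have : μ j - μt (σ0.symm j) = -ν j := by simp [hν]
      rw [this, smul_neg, ← neg_smul]
      congr 1
      ring
    have hcompute : h πt μ2 = h π μ - t ^ 2 / (k:ℝ) * ∑ j, ‖ν j‖ ^ 2 := by
      have hE := h_expand μt μ ν πt t
      have hT1 : ∑ p, ∑ j, πt p j * ‖μ j - μt p‖ ^ 2 = h π μ := by
        have hmm : h πt μ = (1-t) * h π μ + t * h (vm σ0) μ := by
          rw [hπt]; exact hmix t π (vm σ0) μ
        rw [← hh πt μ, hmm, hopt σ0 (ne_of_gt hw0')]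
        ring
      have hT2 : ∑ j, ⟪∑ p, πt p j • (μ j - μt p), ν j⟫
          = -(t/(k:ℝ)) * ∑ j, ‖ν j‖ ^ 2 := by
        rw [Finset.mul_sum]
        refine Finset.sum_congr rfl fun j _ => ?_
        rw [hgrad j, real_inner_smul_left, real_inner_self_eq_norm_sq]
      have hT3 : ∑ j, (∑ p, πt p j) * ‖ν j‖ ^ 2 = (1/(k:ℝ)) * ∑ j, ‖ν j‖ ^ 2 := by
        rw [Finset.mul_sum]
        refine Finset.sum_congr rfl fun j _ => ?_
        have hcs : ∑ p, πt p j = 1/(k:ℝ) := by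
          have := hmem
          rw [hUkk] at this
          exact this.2.1 j
        rw [hcs]
      rw [hh, hμ2]
      rw [hE, hT1, hT2, hT3]
      ring
    rw [hcompute] at hle
    have : 0 < t ^ 2 / (k:ℝ) * ∑ j, ‖ν j‖ ^ 2 := by positivity
    linarith
  refine ⟨hmain, hnonneg, ?_⟩
  intro π hπ μ
  rw [hUkk] at hπ
  obtain ⟨hpos, hcol, hrow⟩ := hπ
  constructor
  · intro h0
    rw [hh] at h0
    have hterm : ∀ p j, π p j * ‖μ j - μt p‖ ^ 2 = 0 := by
      intro p j
      have houter : ∀ p ∈ Finset.univ, (0:ℝ) ≤ ∑ j, π p j * ‖μ j - μt p‖ ^ 2 :=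
        fun p _ => Finset.sum_nonneg fun j _ => mul_nonneg (hpos p j) (by positivity)
      have h1 := (Finset.sum_eq_zero_iff_of_nonneg houter).1 h0 p (mem_univ p)
      have hinner : ∀ j ∈ Finset.univ, (0:ℝ) ≤ π p j * ‖μ j - μt p‖ ^ 2 :=
        fun j _ => mul_nonneg (hpos p j) (by positivity)
      exact (Finset.sum_eq_zero_iff_of_nonneg hinner).1 h1 j (mem_univ j)
    have hcond : ∀ p j, 0 < π p j → μ j = μt p := by
      intro p j hpj
      have h1 := hterm p j
      rcases mul_eq_zero.1 h1 with hc | hc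
      · exact absurd hc (ne_of_gt hpj)
      · have : μ j - μt p = 0 := by
          have := pow_eq_zero_iff (n := 2) (by norm_num) |>.1 hc
          exact norm_eq_zero.1 this
        exact sub_eq_zero.1 this
    have hex : ∀ j, ∃ p, 0 < π p j := by
      intro j
      by_contra hcon
      push_neg at hcon
      have : ∑ p, π p j = 0 :=
        Finset.sum_eq_zero fun p _ => le_antisymm (hcon p) (hpos p j)
      rw [hcol j] at this
      have : (0:ℝ) < 1 / (k:ℝ) := by positivity
      linarith
    choose f hf using hex
    have hμf : ∀ j, μ j = μt (f j) := fun j => hcond _ _ (hf j)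
    have huniq : ∀ p j, 0 < π p j → p = f j := by
      intro p j hpj
      exact hdistinct ((hcond p j hpj).symm.trans (hμf j))
    have hz : ∀ p j, p ≠ f j → π p j = 0 := by
      intro p j hne
      by_contra hne2
      exact hne (huniq p j (lt_of_le_of_ne (hpos p j) (Ne.symm hne2)))
    have hval : ∀ j, π (f j) j = 1 / (k:ℝ) := by
      intro j
      have h1 := hcol j
      rw [Finset.sum_eq_single (f j)] at h1
      · exact h1
      · intro p _ hp; exact hz p j hp
      · intro hmem; exact absurd (mem_univ _) hmem
    have hinj : Function.Injective f := by
      intro j1 j2 hj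
      by_contra hne
      have hsum := hrow (f j1)
      have hle2 : (1:ℝ)/(k:ℝ) + 1/(k:ℝ) ≤ ∑ j, π (f j1) j := by
        calc (1:ℝ)/(k:ℝ) + 1/(k:ℝ) = ∑ j ∈ ({j1, j2} : Finset (Fin k)), π (f j1) j := by
              rw [Finset.sum_pair hne, hval j1]
              congr 1
              rw [hj, hval j2]
          _ ≤ _ := Finset.sum_le_sum_of_subset_of_nonneg (subset_univ _)
                (fun p _ _ => hpos _ p)
      rw [hsum] at hle2
      have : (0:ℝ) < 1 / (k:ℝ) := by positivity
      linarith
    have hbij : Function.Bijective f := ⟨hinj, Finite.surjective_of_injective hinj⟩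
    refine ⟨(Equiv.ofBijective f hbij).symm, ?_, ?_⟩
    · intro p j
      by_cases hc : j = (Equiv.ofBijective f hbij).symm p
      · rw [if_pos hc]
        have hfj : f j = p := by
          rw [hc]
          exact (Equiv.ofBijective f hbij).apply_symm_apply p
        rw [← hfj]
        exact hval j
      · rw [if_neg hc]
        apply hz
        intro hcc
        apply hc
        rw [hcc]
        exact ((Equiv.ofBijective f hbij).symm_apply_apply j).symm
    · intro j
      have heq : (Equiv.ofBijective f hbij).symm.symm j = f j := by
        rw [Equiv.symm_symm, Equiv.ofBijective_apply]
      rw [heq]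
      exact hμf j
  · rintro ⟨e, he1, he2⟩
    rw [hh]
    apply Finset.sum_eq_zero
    intro p _
    apply Finset.sum_eq_zero
    intro j _
    rw [he1 p j]
    by_cases hc : j = e p
    · rw [if_pos hc, he2 j, hc]
      simp
    · rw [if_neg hc, zero_mul]
end

section
/- Suppose x_1, ..., x_n ∈ ℝ^d admit a balanced partition into two clusters C₁, C₂ whose centroids μ₁, μ₂ satisfy ‖μ₁ − μ₂‖ = Δ ≥ 2√2 and ‖x_i − μ_{c(i)}‖ ≤ 1 for every i (c(i) being the cluster of i). Then any pair (i*, j*) achieving the diameter of the dataset (i.e., maximizing ‖x_i − x_j‖ over all pairs) must have i* and j* in different clusters. -/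
open Finset

theorem stmt14 (n d : ℕ) (hn : 0 < n) (h2 : 2 ∣ n)
    (x : Fin n → EuclideanSpace ℝ (Fin d))
    (c : Fin n → Fin 2)
    (hbal : ∀ p : Fin 2, (Finset.univ.filter fun i => c i = p).card = n / 2)
    (μ : Fin 2 → EuclideanSpace ℝ (Fin d))
    (hμ : ∀ p, μ p = (2 / (n : ℝ)) • ∑ i ∈ Finset.univ.filter (fun i => c i = p), x i)
    (Δ : ℝ) (hΔ : Δ = ‖μ 0 - μ 1‖) (hΔbig : 2 * Real.sqrt 2 ≤ Δ)
    (hball : ∀ i, ‖x i - μ (c i)‖ ≤ 1) :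
    ∀ istar jstar : Fin n, (∀ i j, ‖x i - x j‖ ≤ ‖x istar - x jstar‖) →
      c istar ≠ c jstar := by
  intro istar jstar hmax heq
  set M := ‖x istar - x jstar‖ with hM
  have hnpos : (0:ℝ) < n := by exact_mod_cast hn
  have hn0 : (n:ℝ) ≠ 0 := ne_of_gt hnpos
  have hM2 : M ≤ 2 := by
    calc M = ‖(x istar - μ (c istar)) - (x jstar - μ (c jstar))‖ := by
          rw [hM, heq]; congr 1; abel
      _ ≤ ‖x istar - μ (c istar)‖ + ‖x jstar - μ (c jstar)‖ := norm_sub_le _ _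
      _ ≤ 1 + 1 := add_le_add (hball istar) (hball jstar)
      _ = 2 := by norm_num
  set S0 := Finset.univ.filter fun i => c i = (0 : Fin 2) with hS0
  set S1 := Finset.univ.filter fun i => c i = (1 : Fin 2) with hS1
  have hc0 : S0.card = n / 2 := hbal 0
  have hc1 : S1.card = n / 2 := hbal 1
  set r : ℝ := ((n / 2 : ℕ) : ℝ) with hr
  have hrn : r * 2 = n := by rw [hr]; exact_mod_cast Nat.div_mul_cancel h2
  have hds : ∑ i ∈ S0, ∑ j ∈ S1, (x i - x j)
      = r • (∑ i ∈ S0, x i) - r • (∑ j ∈ S1, x j) := by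
    have h1 : ∀ i, ∑ j ∈ S1, (x i - x j) = (S1.card : ℝ) • x i - ∑ j ∈ S1, x j := by
      intro i
      rw [Finset.sum_sub_distrib, Finset.sum_const, ← Nat.cast_smul_eq_nsmul ℝ]
    simp only [h1, Finset.sum_sub_distrib, Finset.sum_const, ← Finset.smul_sum,
      ← Nat.cast_smul_eq_nsmul ℝ, hc0, hc1, hr]
  have hsum : μ 0 - μ 1 = ((2:ℝ)/n * (2/n)) • ∑ i ∈ S0, ∑ j ∈ S1, (x i - x j) := by
    rw [hds, hμ 0, hμ 1, smul_sub, smul_smul, smul_smul]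
    have h3 : (2:ℝ)/n * (2/n) * r = 2/n := by field_simp; nlinarith [hrn]
    rw [h3]
  have hkey : Δ ≤ M := by
    have hb : ‖∑ i ∈ S0, ∑ j ∈ S1, (x i - x j)‖ ≤ r * r * M := by
      calc ‖∑ i ∈ S0, ∑ j ∈ S1, (x i - x j)‖
          ≤ ∑ i ∈ S0, ‖∑ j ∈ S1, (x i - x j)‖ := norm_sum_le _ _
        _ ≤ ∑ i ∈ S0, ∑ j ∈ S1, ‖x i - x j‖ :=
            Finset.sum_le_sum fun i _ => norm_sum_le _ _
        _ ≤ ∑ i ∈ S0, ∑ j ∈ S1, M :=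
            Finset.sum_le_sum fun i _ => Finset.sum_le_sum fun j _ => hmax i j
        _ = r * r * M := by
            rw [Finset.sum_const, Finset.sum_const, hc0, hc1, nsmul_eq_mul, nsmul_eq_mul, hr]
            ring
    calc Δ = ‖μ 0 - μ 1‖ := hΔ
      _ = |(2:ℝ)/n * (2/n)| * ‖∑ i ∈ S0, ∑ j ∈ S1, (x i - x j)‖ := by
          rw [hsum, norm_smul, Real.norm_eq_abs]
      _ ≤ |(2:ℝ)/n * (2/n)| * (r * r * M) :=
          mul_le_mul_of_nonneg_left hb (abs_nonneg _)
      _ = M := by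
          rw [abs_of_pos (by positivity)]
          field_simp
          rw [← hrn]; ring
  have h2s : Real.sqrt 2 ≤ 1 := by nlinarith [hΔbig, hkey, hM2]
  nlinarith [Real.sq_sqrt (by norm_num : (0:ℝ) ≤ 2), Real.sqrt_nonneg 2, h2s]
end

section
/- Fix k = 2, data x_i = μ^♮_{σ(i)} + g_i with a balanced labeling σ : [n] → [2], and a center initialization μ₁^0 ≠ μ₂^0 indexed so that ⟨μ₁^0 − μ₂^0, μ₁^♮ − μ₂^♮⟩ ≥ 0. Let C₁ ⊔ C₂ = [n] be an optimal balanced assignment to (μ₁^0, μ₂^0), and let R := (|C₁ \ σ⁻¹(1)| + |C₂ \ σ⁻¹(2)|)/n be the misclustering rate. Then R² ≤ (1/(n/2)²)·∑_{i∈σ⁻¹(2)} ∑_{j∈σ⁻¹(1)} 1{⟨g_i − g_j, u⟩ ≥ Δ cos θ}, where u := (μ₁^0 − μ₂^0)/‖μ₁^0 − μ₂^0‖, Δ := ‖μ₁^♮ − μ₂^♮‖, and cos θ := ⟨u, (μ₁^♮ − μ₂^♮)/Δ⟩. -/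
open Finset
open scoped RealInnerProductSpace

theorem stmt19 (n d : ℕ) (hn : 0 < n) (h2 : 2 ∣ n)
    (x g : Fin n → EuclideanSpace ℝ (Fin d))
    (σ : Fin n → Fin 2)
    (hbal : ∀ p : Fin 2, (Finset.univ.filter fun i => σ i = p).card = n / 2)
    (μt : Fin 2 → EuclideanSpace ℝ (Fin d))
    (hx : ∀ i, x i = μt (σ i) + g i)
    (μ0 : Fin 2 → EuclideanSpace ℝ (Fin d)) (hne : μ0 0 ≠ μ0 1)
    (hindex : 0 ≤ ⟪μ0 0 - μ0 1, μt 0 - μt 1⟫)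
    (u : EuclideanSpace ℝ (Fin d)) (hu : u = ‖μ0 0 - μ0 1‖⁻¹ • (μ0 0 - μ0 1))
    (Δ : ℝ) (hΔ : Δ = ‖μt 0 - μt 1‖)
    (cosθ : ℝ) (hcos : cosθ = ⟪u, ‖μt 0 - μt 1‖⁻¹ • (μt 0 - μt 1)⟫)
    (τ : Fin n → Fin 2)
    (hτbal : ∀ p : Fin 2, (Finset.univ.filter fun i => τ i = p).card = n / 2)
    (hτopt : ∀ τ' : Fin n → Fin 2,
      (∀ p : Fin 2, (Finset.univ.filter fun i => τ' i = p).card = n / 2) →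
      ∑ i, ‖x i - μ0 (τ i)‖ ^ 2 ≤ ∑ i, ‖x i - μ0 (τ' i)‖ ^ 2)
    (R : ℝ)
    (hR : R = (((Finset.univ.filter fun i => τ i = 0 ∧ σ i ≠ 0).card
        + (Finset.univ.filter fun i => τ i = 1 ∧ σ i ≠ 1).card : ℕ) : ℝ) / (n : ℝ)) :
    R ^ 2 ≤ (1 / ((n : ℝ) / 2) ^ 2) *
      ∑ i ∈ Finset.univ.filter (fun i => σ i = 1),
        ∑ j ∈ Finset.univ.filter (fun j => σ j = 0),
          (if Δ * cosθ ≤ ⟪g i - g j, u⟫ then (1 : ℝ) else 0) := by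
  have fin2 : ∀ a : Fin 2, ¬(a = 0) ↔ a = 1 := by decide
  have fin2' : ∀ a : Fin 2, ¬(a = 1) ↔ a = 0 := by decide
  set v := μ0 0 - μ0 1 with hv
  set w := μt 0 - μt 1 with hw
  -- Δ * cosθ = ⟪w, u⟫
  have hDc : Δ * cosθ = ⟪w, u⟫ := by
    by_cases hw0 : w = 0
    · simp [hΔ, hcos, hw0]
    · have hnw : ‖w‖ ≠ 0 := norm_ne_zero_iff.mpr hw0
      rw [hΔ, hcos, real_inner_smul_right, real_inner_comm]
      field_simp
  -- exchange inequality
  have exch : ∀ i j : Fin n, σ i = 1 → τ i = 0 → σ j = 0 → τ j = 1 →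
      Δ * cosθ ≤ ⟪g i - g j, u⟫ := by
    intro i j hσi hτi hσj hτj
    have hij : i ≠ j := by intro h; rw [h, hτj] at hτi; exact absurd hτi (by decide)
    set τ' : Fin n → Fin 2 := fun k => τ (Equiv.swap i j k) with hτ'
    have hbal' : ∀ p : Fin 2, (Finset.univ.filter fun k => τ' k = p).card = n / 2 := by
      intro p
      have hmap : (Finset.univ.filter fun k => τ' k = p)
          = (Finset.univ.filter fun k => τ k = p).map (Equiv.swap i j).toEmbedding := by
        ext a
        simp only [mem_map, mem_filter, mem_univ, true_and, Equiv.coe_toEmbedding, hτ']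
        constructor
        · intro h; exact ⟨Equiv.swap i j a, h, Equiv.swap_apply_self _ _ _⟩
        · rintro ⟨b, hb, rfl⟩; rwa [Equiv.swap_apply_self]
      rw [hmap, Finset.card_map, hτbal]
    have hle := hτopt τ' hbal'
    have hsum : (0:ℝ) ≤ ∑ k, (‖x k - μ0 (τ' k)‖ ^ 2 - ‖x k - μ0 (τ k)‖ ^ 2) := by
      rw [Finset.sum_sub_distrib]; linarith
    have hzero : ∀ k ∈ Finset.univ, k ∉ ({i, j} : Finset (Fin n)) →
        (‖x k - μ0 (τ' k)‖ ^ 2 - ‖x k - μ0 (τ k)‖ ^ 2) = 0 := by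
      intro k _ hk
      simp only [Finset.mem_insert, Finset.mem_singleton, not_or] at hk
      have : τ' k = τ k := by
        simp only [hτ', Equiv.swap_apply_of_ne_of_ne hk.1 hk.2]
      rw [this, sub_self]
    have hpair : ∑ k ∈ ({i, j} : Finset (Fin n)),
        (‖x k - μ0 (τ' k)‖ ^ 2 - ‖x k - μ0 (τ k)‖ ^ 2)
        = ∑ k, (‖x k - μ0 (τ' k)‖ ^ 2 - ‖x k - μ0 (τ k)‖ ^ 2) :=
      Finset.sum_subset (Finset.subset_univ _) hzero
    rw [← hpair, Finset.sum_pair hij] at hsum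
    have hτ'i : τ' i = 1 := by simp [hτ', Equiv.swap_apply_left, hτj]
    have hτ'j : τ' j = 0 := by simp [hτ', Equiv.swap_apply_right, hτi]
    rw [hτ'i, hτ'j, hτi, hτj] at hsum
    -- expand norms
    have e1 := @norm_sub_sq_real _ _ _ (x i) (μ0 1)
    have e2 := @norm_sub_sq_real _ _ _ (x i) (μ0 0)
    have e3 := @norm_sub_sq_real _ _ _ (x j) (μ0 0)
    have e4 := @norm_sub_sq_real _ _ _ (x j) (μ0 1)
    have hxiv : (0:ℝ) ≤ ⟪x i - x j, v⟫ := by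
      rw [hv, inner_sub_left, inner_sub_right, inner_sub_right]
      linarith
    have hxiexp : x i - x j = (g i - g j) - w := by
      rw [hx i, hx j, hσi, hσj, hw]
      abel
    have hgv : ⟪w, v⟫ ≤ ⟪g i - g j, v⟫ := by
      rw [hxiexp, inner_sub_left] at hxiv
      linarith
    rw [hDc, hu, real_inner_smul_right, real_inner_smul_right]
    have : (0:ℝ) ≤ ‖v‖⁻¹ := by positivity
    exact mul_le_mul_of_nonneg_left hgv this
  -- counting
  have split2 : ∀ (s : Finset (Fin n)) (f : Fin n → Fin 2),
      (s.filter fun i => f i = 0).card + (s.filter fun i => f i = 1).card = s.card := by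
    intro s f
    have h := Finset.card_filter_add_card_filter_not (s := s) (p := fun i => f i = 0)
    have heq : (s.filter fun a => ¬ f a = 0) = s.filter fun i => f i = 1 :=
      Finset.filter_congr (fun i _ => fin2 (f i))
    rw [heq] at h
    exact h
  have c1 : (Finset.univ.filter fun i => τ i = 0 ∧ σ i = 0).card
      + (Finset.univ.filter fun i => τ i = 0 ∧ σ i = 1).card = n / 2 := by
    have := split2 (Finset.univ.filter fun i => τ i = 0) σ
    rw [Finset.filter_filter, Finset.filter_filter, hτbal] at this
    exact this
  have c2 : (Finset.univ.filter fun i => σ i = 0 ∧ τ i = 0).card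
      + (Finset.univ.filter fun i => σ i = 0 ∧ τ i = 1).card = n / 2 := by
    have := split2 (Finset.univ.filter fun i => σ i = 0) τ
    rw [Finset.filter_filter, Finset.filter_filter, hbal] at this
    exact this
  have csame : (Finset.univ.filter fun i => τ i = 0 ∧ σ i = 0)
      = (Finset.univ.filter fun i => σ i = 0 ∧ τ i = 0) := by
    apply Finset.filter_congr; intro i _; exact and_comm
  set A := Finset.univ.filter fun i => σ i = 1 ∧ τ i = 0 with hA
  set B := Finset.univ.filter fun j => σ j = 0 ∧ τ j = 1 with hB
  have hAeq : (Finset.univ.filter fun i => τ i = 0 ∧ σ i ≠ 0) = A := by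
    apply Finset.filter_congr; intro i _
    simp only [ne_eq, fin2 (σ i)]; exact and_comm
  have hBeq : (Finset.univ.filter fun i => τ i = 1 ∧ σ i ≠ 1) = B := by
    apply Finset.filter_congr; intro i _
    simp only [ne_eq, fin2' (σ i)]; exact and_comm
  have hAB : A.card = B.card := by
    have hA' : (Finset.univ.filter fun i => τ i = 0 ∧ σ i = 1) = A := by
      apply Finset.filter_congr; intro i _; exact and_comm
    rw [csame] at c1
    rw [← hA']
    omega
  set m := A.card with hm
  -- sum bound
  have hsumB : ∀ i ∈ A, (m : ℝ) ≤ ∑ j ∈ Finset.univ.filter (fun j => σ j = 0),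
      (if Δ * cosθ ≤ ⟪g i - g j, u⟫ then (1 : ℝ) else 0) := by
    intro i hi
    simp only [hA, Finset.mem_filter] at hi
    have hBsub : B ⊆ Finset.univ.filter (fun j => σ j = 0) := by
      intro j hj; simp only [hB, Finset.mem_filter] at hj
      simp [hj.2.1]
    calc (m : ℝ) = ∑ j ∈ B, (1:ℝ) := by rw [Finset.sum_const, nsmul_eq_mul, mul_one]; exact_mod_cast hAB
    _ = ∑ j ∈ B, (if Δ * cosθ ≤ ⟪g i - g j, u⟫ then (1 : ℝ) else 0) := by
        apply Finset.sum_congr rfl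
        intro j hj
        simp only [hB, Finset.mem_filter] at hj
        rw [if_pos (exch i j hi.2.1 hi.2.2 hj.2.1 hj.2.2)]
    _ ≤ _ := by
        apply Finset.sum_le_sum_of_subset_of_nonneg hBsub
        intro j _ _
        split <;> norm_num
  have hS : (m : ℝ) * m ≤ ∑ i ∈ Finset.univ.filter (fun i => σ i = 1),
      ∑ j ∈ Finset.univ.filter (fun j => σ j = 0),
        (if Δ * cosθ ≤ ⟪g i - g j, u⟫ then (1 : ℝ) else 0) := by
    have hAsub : A ⊆ Finset.univ.filter (fun i => σ i = 1) := by
      intro i hi; simp only [hA, Finset.mem_filter] at hi; simp [hi.2.1]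
    calc (m : ℝ) * m = ∑ i ∈ A, (m : ℝ) := by rw [Finset.sum_const, nsmul_eq_mul]
    _ ≤ ∑ i ∈ A, ∑ j ∈ Finset.univ.filter (fun j => σ j = 0),
          (if Δ * cosθ ≤ ⟪g i - g j, u⟫ then (1 : ℝ) else 0) :=
        Finset.sum_le_sum hsumB
    _ ≤ _ := by
        apply Finset.sum_le_sum_of_subset_of_nonneg hAsub
        intro i _ _
        apply Finset.sum_nonneg
        intro j _
        split <;> norm_num
  -- final arithmetic
  have hRval : R = 2 * (m : ℝ) / n := by
    rw [hR, hAeq, hBeq, ← hAB, ← hm]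
    push_cast; ring
  have hn' : (0:ℝ) < n := by exact_mod_cast hn
  rw [hRval]
  rw [div_pow, one_div, inv_mul_eq_div, div_pow, div_le_div_iff₀ (by positivity) (by positivity)]
  nlinarith [hS, sq_nonneg ((n:ℝ)), mul_pos hn' hn']
end
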